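/- arXiv:2406.09472 — 14 statements merged into one kernel-verified Lean document; each statement's English description precedes it below -/
import Mathlib

section
/- Let {A_v, B_v, C_v, D_v} and {A_w, B_w, C_w, D_w} be stable dissipative realizations, with A_v of size n_v×n_v, A_w of size n_w×n_w, and common input/output dimension m. Let Ω be an n_v×n_w complex matrix satisfying the Lyapunov equation A_vΩ + ΩA_w* + B_vB_w* = 0, let C_∘ = D_vB_w* + C_vΩ (an m×n_w matrix), and let Q be an n_w×n_w complex matrix satisfying the Lyapunov equation A_wQ + QA_w* + C_∘*C_∘ = 0. Then Q is a positive semidefinite contraction: both Q and I − Q are Hermitian positive semidefinite. -/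
open Matrix
open scoped ComplexOrder

/-- A quadruple `{A, B, C, D}` is a *stable dissipative realization* if every
eigenvalue of `A` has negative real part, `A + Aᴴ + Cᴴ * C = 0`, `D` is
unitary, and `B = -(Cᴴ * D)`. -/
def IsStableDissipative {n m : ℕ} (A : Matrix (Fin n) (Fin n) ℂ)
    (B : Matrix (Fin n) (Fin m) ℂ) (C : Matrix (Fin m) (Fin n) ℂ)
    (D : Matrix (Fin m) (Fin m) ℂ) : Prop :=
  (∀ z ∈ spectrum ℂ A, z.re < 0) ∧ A + Aᴴ + Cᴴ * C = 0 ∧ Dᴴ * D = 1 ∧ B = -(Cᴴ * D)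

/-!
Expanding with the equations for `Ω` and the two realizations gives
`Aw (1 - ΩᴴΩ) + (1 - ΩᴴΩ) Awᴴ + Coᴴ Co = 0`, so `Q = 1 - ΩᴴΩ` by uniqueness of solutions of the
Lyapunov equation for the stable matrix `Aw`; hence `1 - Q = ΩᴴΩ ≥ 0`, while `Q ≥ 0` because it
solves a Lyapunov equation with stable coefficient and positive right-hand side.

Both Lyapunov facts hold in any C⋆-algebra. The Cayley transform `t = (1 - a)⁻¹ (1 + a)` turns
`a x + x a⋆ + s = 0` into the Stein equation `x - t x t⋆ = p` with `p = (1 - a)⁻¹ (2 s) ((1 - a)⁻¹)⋆`.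
The spectrum of `t` lies in the open unit disc, so `tᵏ → 0` by Gelfand's formula, and
`x = lim ∑_{j<k} tʲ p t⋆ʲ ≥ 0`.
-/

open Filter Topology

theorem tendsto_pow_atTop_nhds_zero_of_norm_spectrum_lt_one {A : Type*} [NormedRing A]
    [NormedAlgebra ℂ A] [CompleteSpace A] {a : A} (ha : ∀ z ∈ spectrum ℂ a, ‖z‖ < 1) :
    Tendsto (a ^ ·) atTop (𝓝 0) := by
  rcases subsingleton_or_nontrivial A with _ | _
  · simp [Subsingleton.elim _ (0 : A)]
  have hρ : spectralRadius ℂ a < 1 := by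
    simpa using spectrum.spectralRadius_lt_of_forall_lt a (r := 1) fun z hz => ha z hz
  obtain ⟨r, hρr, hr⟩ := ENNReal.lt_iff_exists_nnreal_btwn.mp hρ
  have hr1 : r < 1 := by exact_mod_cast hr
  refine squeeze_zero_norm' ?_ (tendsto_pow_atTop_nhds_zero_of_lt_one r.2 hr1)
  filter_upwards [(spectrum.pow_nnnorm_pow_one_div_tendsto_nhds_spectralRadius a).eventually
    (gt_mem_nhds hρr), eventually_gt_atTop 0] with n hn hn0
  rw [← ENNReal.coe_rpow_of_nonneg _ (by positivity), ENNReal.coe_lt_coe, one_div,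
    NNReal.rpow_inv_lt_iff (by positivity)] at hn
  exact_mod_cast hn.le

theorem norm_lt_one_of_mem_spectrum_cayley {A : Type*} [Ring A] [Algebra ℂ A] {a : A} {u : Aˣ}
    (ha : ∀ z ∈ spectrum ℂ a, z.re < 0) (hu : (u : A) = 1 - a) :
    ∀ z ∈ spectrum ℂ (↑u⁻¹ * (1 + a)), ‖z‖ < 1 := by
  intro z hz
  by_contra! hz1
  refine spectrum.mem_iff.mp hz ?_
  rw [← Units.isUnit_units_mul u, mul_sub, ← mul_assoc, Units.mul_inv, one_mul, hu,
    ← Algebra.commutes]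
  have hfactor : algebraMap ℂ A z * (1 - a) - (1 + a) = algebraMap ℂ A (z - 1) - (z + 1) • a := by
    simp only [Algebra.algebraMap_eq_smul_one, mul_sub, smul_one_mul, mul_one, sub_smul,
      add_smul, one_smul]
    abel
  rw [hfactor]
  rcases eq_or_ne (z + 1) 0 with hz' | hz'
  · rw [hz', zero_smul, sub_zero]
    refine (Ne.isUnit ?_).map (algebraMap ℂ A)
    rw [← eq_neg_iff_add_eq_zero] at hz'
    norm_num [hz']
  -- `w` is the preimage of `z` under the Cayley map, and `Re w = (‖z‖² - 1) / ‖z + 1‖² ≥ 0`.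
  set w := (z - 1) / (z + 1)
  have hw : w ∉ spectrum ℂ a := by
    refine fun hw => (ha w hw).not_ge ?_
    have hnum : (z - 1).re * (z + 1).re + (z - 1).im * (z + 1).im = ‖z‖ ^ 2 - 1 := by
      rw [← Complex.normSq_eq_norm_sq, Complex.normSq_apply]
      simp only [Complex.sub_re, Complex.add_re, Complex.one_re, Complex.sub_im, Complex.add_im,
        Complex.one_im]
      ring
    rw [Complex.div_re, ← add_div, hnum]
    exact div_nonneg (sub_nonneg.mpr (one_le_pow₀ hz1)) (Complex.normSq_nonneg _)
  have hw' : algebraMap ℂ A (z - 1) - (z + 1) • a =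
      algebraMap ℂ A (z + 1) * (algebraMap ℂ A w - a) := by
    rw [mul_sub, ← map_mul, mul_div_cancel₀ _ hz', Algebra.algebraMap_eq_smul_one (z + 1),
      smul_one_mul]
  rw [hw']
  exact ((Ne.isUnit hz').map _).mul (spectrum.notMem_iff.mp hw)

section SteinEquation

variable {A : Type*} [Ring A] [StarRing A]

theorem stein_equation_iterate {x t p : A} (h : x - t * x * star t = p) (k : ℕ) :
    x = t ^ k * x * star t ^ k + ∑ j ∈ Finset.range k, t ^ j * p * star t ^ j := by
  induction k with
  | zero => simp
  | succ k ih =>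
    have hlast : t ^ k * p * star t ^ k =
        t ^ k * x * star t ^ k - t ^ (k + 1) * x * star t ^ (k + 1) := by
      rw [← h, pow_succ, pow_succ']
      noncomm_ring
    rw [Finset.sum_range_succ, hlast]
    conv_lhs => rw [ih]
    abel

variable [PartialOrder A] [StarOrderedRing A] [TopologicalSpace A] [IsTopologicalRing A]
  [ContinuousStar A] [OrderClosedTopology A]

theorem nonneg_of_stein_equation {x t p : A} (ht : Tendsto (t ^ ·) atTop (𝓝 0))
    (h : x - t * x * star t = p) (hp : 0 ≤ p) : 0 ≤ x := by
  have hrem : Tendsto (fun k => t ^ k * x * star t ^ k) atTop (𝓝 0) := by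
    simpa [star_pow] using (ht.mul_const x).mul ht.star
  have hsum : Tendsto (fun k => ∑ j ∈ Finset.range k, t ^ j * p * star t ^ j) atTop (𝓝 x) := by
    simpa using (tendsto_const_nhds (x := x)).sub hrem |>.congr fun k => by
      rw [sub_eq_iff_eq_add', ← stein_equation_iterate h k]
  exact ge_of_tendsto' hsum fun k => Finset.sum_nonneg fun j _ => by
    simpa [star_pow] using star_right_conjugate_nonneg hp (t ^ j)

end SteinEquation

section LyapunovEquation

variable {A : Type*} [CStarAlgebra A] [PartialOrder A] [StarOrderedRing A]

theorem nonneg_of_lyapunov_equation {a x s : A} (ha : ∀ z ∈ spectrum ℂ a, z.re < 0)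
    (h : a * x + x * star a + s = 0) (hs : 0 ≤ s) : 0 ≤ x := by
  obtain ⟨u, hu⟩ : IsUnit (1 - a) := by
    simpa using spectrum.notMem_iff.mp fun h => (ha 1 h).not_ge zero_le_one
  have hx : x = ↑u⁻¹ * (u * x * star (u : A)) * star (↑u⁻¹ : A) := by
    rw [← mul_assoc, ← mul_assoc, Units.inv_mul, one_mul, mul_assoc, ← star_mul, Units.inv_mul,
      star_one, mul_one]
  have hstein : x - (↑u⁻¹ * (1 + a)) * x * star (↑u⁻¹ * (1 + a)) =
      ↑u⁻¹ * (s + s) * star (↑u⁻¹ : A) := by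
    have hconj : u * x * star (u : A) - (1 + a) * x * star (1 + a) = s + s := by
      rw [hu, star_sub, star_add, star_one, ← neg_neg s, ← eq_neg_of_add_eq_zero_left h]
      noncomm_ring
    rw [← hconj, mul_sub, sub_mul, ← hx, star_mul]
    noncomm_ring
  exact nonneg_of_stein_equation
    (tendsto_pow_atTop_nhds_zero_of_norm_spectrum_lt_one (norm_lt_one_of_mem_spectrum_cayley ha hu))
    hstein (star_right_conjugate_nonneg (add_nonneg hs hs) _)

theorem eq_of_lyapunov_equation {a x y s : A} (ha : ∀ z ∈ spectrum ℂ a, z.re < 0)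
    (hx : a * x + x * star a + s = 0) (hy : a * y + y * star a + s = 0) : x = y := by
  have hle : ∀ {x y : A}, a * x + x * star a + s = 0 → a * y + y * star a + s = 0 → x ≤ y := by
    intro x y hx hy
    refine sub_nonneg.mp (nonneg_of_lyapunov_equation ha (s := 0) ?_ le_rfl)
    calc a * (y - x) + (y - x) * star a + 0
        = (a * y + y * star a + s) - (a * x + x * star a + s) := by noncomm_ring
      _ = 0 := by rw [hx, hy, sub_zero]
  exact le_antisymm (hle hx hy) (hle hy hx)

end LyapunovEquation

namespace Matrix

section Lyapunov

-- The L2 operator norm makes square complex matrices a C⋆-algebra whose order is the Loewner order.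
open scoped Matrix.Norms.L2Operator MatrixOrder

variable {n : Type*} [Fintype n] [DecidableEq n]

theorem posSemidef_of_lyapunov_equation {A X S : Matrix n n ℂ}
    (hA : ∀ z ∈ spectrum ℂ A, z.re < 0) (h : A * X + X * Aᴴ + S = 0) (hS : S.PosSemidef) :
    X.PosSemidef := by
  rw [← nonneg_iff_posSemidef] at hS ⊢
  exact nonneg_of_lyapunov_equation hA h hS

theorem eq_of_lyapunov_equation {A X Y S : Matrix n n ℂ} (hA : ∀ z ∈ spectrum ℂ A, z.re < 0)
    (hX : A * X + X * Aᴴ + S = 0) (hY : A * Y + Y * Aᴴ + S = 0) : X = Y :=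
  _root_.eq_of_lyapunov_equation hA hX hY

end Lyapunov

variable {l m n R : Type*} [CommRing R] [StarRing R]

theorem mul_conjTranspose_eq_of_unitary [Fintype m] [DecidableEq m] {B : Matrix n m R}
    {C : Matrix m n R} {D : Matrix m m R} (hD : Dᴴ * D = 1) (hB : B = -(Cᴴ * D)) :
    B * Bᴴ = Cᴴ * C := by
  rw [hB, conjTranspose_neg, conjTranspose_mul, conjTranspose_conjTranspose, Matrix.neg_mul,
    Matrix.mul_neg, neg_neg, Matrix.mul_assoc, ← Matrix.mul_assoc D, mul_eq_one_comm.mp hD,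
    Matrix.one_mul]

theorem lyapunov_one_sub_conjTranspose_mul_self [Fintype l] [Fintype m] [Fintype n]
    [DecidableEq m] [DecidableEq n]
    {Av : Matrix l l R} {Bv : Matrix l m R} {Cv : Matrix m l R} {Dv : Matrix m m R}
    {Aw : Matrix n n R} {Bw : Matrix n m R} {Cw : Matrix m n R} {Ω : Matrix l n R}
    (hv : Av + Avᴴ + Cvᴴ * Cv = 0) (hDv : Dvᴴ * Dv = 1) (hBv : Bv = -(Cvᴴ * Dv))
    (hw : Aw + Awᴴ + Cwᴴ * Cw = 0) (hBw : Bw * Bwᴴ = Cwᴴ * Cw)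
    (hΩ : Av * Ω + Ω * Awᴴ + Bv * Bwᴴ = 0) :
    Aw * (1 - Ωᴴ * Ω) + (1 - Ωᴴ * Ω) * Awᴴ + (Dv * Bwᴴ + Cv * Ω)ᴴ * (Dv * Bwᴴ + Cv * Ω) = 0 := by
  have hΩ' : Ωᴴ * Avᴴ + Aw * Ωᴴ + Bw * Bvᴴ = 0 := by
    simpa only [conjTranspose_add, conjTranspose_mul, conjTranspose_conjTranspose,
      conjTranspose_zero, add_comm (Ωᴴ * Avᴴ)] using congrArg conjTranspose hΩ
  calc Aw * (1 - Ωᴴ * Ω) + (1 - Ωᴴ * Ω) * Awᴴ + (Dv * Bwᴴ + Cv * Ω)ᴴ * (Dv * Bwᴴ + Cv * Ω)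
      = (Aw + Awᴴ + Cwᴴ * Cw) + Ωᴴ * (Av + Avᴴ + Cvᴴ * Cv) * Ω
          - Ωᴴ * (Av * Ω + Ω * Awᴴ + Bv * Bwᴴ) - (Ωᴴ * Avᴴ + Aw * Ωᴴ + Bw * Bvᴴ) * Ω
          + (Bw * Bwᴴ - Cwᴴ * Cw) + Bw * (Dvᴴ * Dv - 1) * Bwᴴ := by
        subst hBv
        simp only [conjTranspose_add, conjTranspose_mul, conjTranspose_neg,
          conjTranspose_conjTranspose, Matrix.add_mul, Matrix.mul_add, Matrix.sub_mul,
          Matrix.mul_sub, Matrix.neg_mul, Matrix.mul_neg, Matrix.mul_one, Matrix.one_mul,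
          Matrix.mul_assoc]
        abel
    _ = 0 := by rw [hv, hDv, hw, hΩ, hΩ', hBw]; simp

end Matrix

theorem stmt_0 {nv nw m : ℕ}
    (Av : Matrix (Fin nv) (Fin nv) ℂ) (Bv : Matrix (Fin nv) (Fin m) ℂ)
    (Cv : Matrix (Fin m) (Fin nv) ℂ) (Dv : Matrix (Fin m) (Fin m) ℂ)
    (Aw : Matrix (Fin nw) (Fin nw) ℂ) (Bw : Matrix (Fin nw) (Fin m) ℂ)
    (Cw : Matrix (Fin m) (Fin nw) ℂ) (Dw : Matrix (Fin m) (Fin m) ℂ)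
    (hv : IsStableDissipative Av Bv Cv Dv)
    (hw : IsStableDissipative Aw Bw Cw Dw)
    (Ω : Matrix (Fin nv) (Fin nw) ℂ)
    (hΩ : Av * Ω + Ω * Awᴴ + Bv * Bwᴴ = 0)
    (Co : Matrix (Fin m) (Fin nw) ℂ)
    (hCo : Co = Dv * Bwᴴ + Cv * Ω)
    (Q : Matrix (Fin nw) (Fin nw) ℂ)
    (hQ : Aw * Q + Q * Awᴴ + Coᴴ * Co = 0) :
    Q.PosSemidef ∧ (1 - Q).PosSemidef := by
  obtain ⟨-, hv, hDv, hBv⟩ := hv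
  obtain ⟨hAw, hw, hDw, hBw⟩ := hw
  have hP : Aw * (1 - Ωᴴ * Ω) + (1 - Ωᴴ * Ω) * Awᴴ + Coᴴ * Co = 0 := hCo ▸
    lyapunov_one_sub_conjTranspose_mul_self hv hDv hBv hw (mul_conjTranspose_eq_of_unitary hDw hBw) hΩ
  have hQΩ : Q = 1 - Ωᴴ * Ω := eq_of_lyapunov_equation hAw hQ hP
  refine ⟨posSemidef_of_lyapunov_equation hAw hQ (posSemidef_conjTranspose_mul_self Co), ?_⟩
  rw [hQΩ, sub_sub_cancel]
  exact posSemidef_conjTranspose_mul_self Ω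
end

section
/- Let A be an m×m complex matrix and B an n×n complex matrix, each with all eigenvalues having negative real part, and let C be an arbitrary m×n complex matrix. Then the integral Ω = ∫₀^∞ exp(τA)·C·exp(τB) dτ converges, the matrix Ω satisfies the Sylvester equation AΩ + ΩB + C = 0, and Ω is the unique m×n matrix satisfying this equation. -/
/-!
On the generalized eigenspace of `A` for `μ`, `exp (τ • A)` acts as `e^{τμ}` times a polynomial
in `τ`, so stability of `A` forces `exp (τ • A) → 0`; applied to `A + ε • 1` for small `ε > 0`
this gives `exp (τ • A) = O(e^{-ετ})`. Hence `F_X τ = exp (τ • A) * X * exp (τ • B)` is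
integrable on `(0, ∞)` and tends to `0`. As `F_X' = A F_X + F_X B`, the fundamental theorem of
calculus gives `A Ω + Ω B = ∫ F_C' = -C`. If `A Y + Y B = 0`, then `F_Y' = F_{AY+YB} = 0`, so
`F_Y` is constantly `Y` while tending to `0`: the map `X ↦ A X + X B` is injective.
-/

open Matrix MeasureTheory

attribute [local instance] Matrix.frobeniusNormedAddCommGroup Matrix.frobeniusNormedSpace

open NormedSpace Filter Topology Set Asymptotics
open scoped Nat

attribute [local instance] Matrix.frobeniusNormedRing Matrix.frobeniusNormedAlgebra

theorem Complex.tendsto_ofReal_pow_mul_exp_mul_atTop {s : ℂ} (hs : s.re < 0) (j : ℕ) :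
    Tendsto (fun τ : ℝ => (τ : ℂ) ^ j * Complex.exp (τ * s)) atTop (𝓝 0) := by
  rw [tendsto_zero_iff_norm_tendsto_zero]
  refine (tendsto_rpow_mul_exp_neg_mul_atTop_nhds_zero j (-s.re) (by linarith)).congr' ?_
  filter_upwards [eventually_ge_atTop 0] with τ hτ
  simp [Complex.norm_exp, abs_of_nonneg hτ, mul_comm]

theorem HasDerivAt.matrix_mul {l m n 𝕜 : Type*} [Fintype l] [Fintype m] [Fintype n] [RCLike 𝕜]
    {u : ℝ → Matrix l m 𝕜} {v : ℝ → Matrix m n 𝕜} {u' : Matrix l m 𝕜} {v' : Matrix m n 𝕜}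
    {x : ℝ} (hu : HasDerivAt u u' x) (hv : HasDerivAt v v' x) :
    HasDerivAt (fun x => u x * v x) (u x * v' + u' * v x) x :=
  ((mulLinearMap ℝ : Matrix l m 𝕜 →ₗ[ℝ] Matrix m n 𝕜 →ₗ[ℝ] Matrix l n 𝕜).mkContinuous₂ 1
    fun (P : Matrix l m 𝕜) (Q : Matrix m n 𝕜) => by simpa using frobenius_norm_mul P Q
    ).hasDerivAt_of_bilinear (fun _ => hu) (fun _ => hv)

namespace Matrix

section Decay

variable {ι : Type*} [Fintype ι] [DecidableEq ι]

theorem exp_add_smul_one (A : Matrix ι ι ℂ) (c : ℂ) :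
    exp (A + c • 1) = Complex.exp c • exp A := by
  have hscalar : exp (algebraMap ℂ (Matrix ι ι ℂ) c) = algebraMap ℂ _ (exp c) :=
    (algebraMap_exp_comm c).symm
  rw [← Algebra.algebraMap_eq_smul_one, Matrix.exp_add_of_commute _ _ (Algebra.commutes c A).symm,
    hscalar, Algebra.algebraMap_eq_smul_one, mul_smul_comm, mul_one, Complex.exp_eq_exp_ℂ]

theorem mem_spectrum_of_pow_sub_smul_one_mulVec_eq_zero {K : Type*} [Field K]
    {A : Matrix ι ι K} {μ : K} {v : ι → K} {k : ℕ} (hv0 : v ≠ 0)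
    (hv : (A - μ • 1) ^ k *ᵥ v = 0) : μ ∈ spectrum K A := by
  by_contra hμ
  have hunit : IsUnit ((A - μ • 1) ^ k) := by
    refine IsUnit.pow k ?_
    simpa [Algebra.algebraMap_eq_smul_one] using (spectrum.notMem_iff.1 hμ).neg
  exact hv0 (mulVec_injective_iff_isUnit.2 hunit (hv.trans (mulVec_zero _).symm))

theorem exp_mulVec_of_pow_sub_smul_one_mulVec_eq_zero {A : Matrix ι ι ℂ} {μ : ℂ}
    {v : ι → ℂ} {k : ℕ} (hv : (A - μ • 1) ^ k *ᵥ v = 0) :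
    exp A *ᵥ v = Complex.exp μ • ∑ j ∈ Finset.range k, (j ! : ℂ)⁻¹ • ((A - μ • 1) ^ j *ᵥ v) := by
  set N := A - μ • 1
  have hseries : HasSum (fun j => (j ! : ℂ)⁻¹ • (N ^ j *ᵥ v)) (exp N *ᵥ v) := by
    have := (exp_series_hasSum_exp' (𝕂 := ℂ) N).map
      (mulVec.addMonoidHomLeft v) (continuous_id.matrix_mulVec continuous_const)
    simp only [Function.comp_def, mulVec.addMonoidHomLeft, AddMonoidHom.coe_mk, ZeroHom.coe_mk,
      smul_mulVec] at this
    exact this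
  have hfinite : exp N *ᵥ v = ∑ j ∈ Finset.range k, (j ! : ℂ)⁻¹ • (N ^ j *ᵥ v) := by
    refine hseries.unique (hasSum_sum_of_ne_finset_zero fun j hj => ?_)
    rw [← Nat.sub_add_cancel (not_lt.1 (Finset.mem_range.not.1 hj)), pow_add, ← mulVec_mulVec,
      hv, mulVec_zero, smul_zero]
  rw [show A = N + μ • 1 by simp [N], exp_add_smul_one, smul_mulVec, hfinite]

theorem tendsto_exp_smul_mulVec_of_pow_sub_smul_one_mulVec_eq_zero {A : Matrix ι ι ℂ}
    (hA : ∀ z ∈ spectrum ℂ A, z.re < 0) {μ : ℂ} {v : ι → ℂ} {k : ℕ}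
    (hv : (A - μ • 1) ^ k *ᵥ v = 0) :
    Tendsto (fun τ : ℝ => exp (τ • A) *ᵥ v) atTop (𝓝 0) := by
  rcases eq_or_ne v 0 with rfl | hv0
  · simpa only [mulVec_zero] using tendsto_const_nhds
  have hμ := hA μ (mem_spectrum_of_pow_sub_smul_one_mulVec_eq_zero hv0 hv)
  have hexp (τ : ℝ) : exp (τ • A) *ᵥ v = ∑ j ∈ Finset.range k,
      (((τ : ℂ) ^ j * Complex.exp (τ * μ)) * (j ! : ℂ)⁻¹) • ((A - μ • 1) ^ j *ᵥ v) := by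
    have hτv : ((τ : ℂ) • A - ((τ : ℂ) * μ) • 1) ^ k *ᵥ v = 0 := by
      rw [mul_smul, ← smul_sub, smul_pow, smul_mulVec, hv, smul_zero]
    refine (exp_mulVec_of_pow_sub_smul_one_mulVec_eq_zero hτv).trans ?_
    rw [Finset.smul_sum]
    refine Finset.sum_congr rfl fun j _ => ?_
    rw [mul_smul, ← smul_sub, smul_pow, smul_mulVec, smul_smul, smul_smul]
    ring_nf
  simp_rw [hexp]
  simpa using tendsto_finsetSum (Finset.range k) fun j _ =>
    (((Complex.tendsto_ofReal_pow_mul_exp_mul_atTop hμ j).mul_const (j ! : ℂ)⁻¹).smul_const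
      ((A - μ • 1) ^ j *ᵥ v))

theorem tendsto_exp_smul_mulVec_atTop {A : Matrix ι ι ℂ} (hA : ∀ z ∈ spectrum ℂ A, z.re < 0)
    (v : ι → ℂ) : Tendsto (fun τ : ℝ => exp (τ • A) *ᵥ v) atTop (𝓝 0) := by
  have hv : v ∈ ⨆ μ, Module.End.maxGenEigenspace (toLin' A) μ := by
    rw [Module.End.iSup_maxGenEigenspace_eq_top]; trivial
  refine Submodule.iSup_induction _
    (motive := fun w => Tendsto (fun τ : ℝ => exp (τ • A) *ᵥ w) atTop (𝓝 0)) hv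
    (fun μ w hw => ?_) ?_ fun w₁ w₂ h₁ h₂ => ?_
  · obtain ⟨k, hk⟩ := (Module.End.mem_maxGenEigenspace _ _ _).1 hw
    refine tendsto_exp_smul_mulVec_of_pow_sub_smul_one_mulVec_eq_zero hA (μ := μ) (k := k) ?_
    rwa [Module.End.one_eq_id, ← toLin'_one, ← map_smul, ← map_sub, ← toLin'_pow,
      toLin'_apply] at hk
  · simpa only [mulVec_zero] using tendsto_const_nhds
  · simpa only [mulVec_add, add_zero] using h₁.add h₂

theorem tendsto_exp_smul_atTop {A : Matrix ι ι ℂ} (hA : ∀ z ∈ spectrum ℂ A, z.re < 0) :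
    Tendsto (fun τ : ℝ => exp (τ • A)) atTop (𝓝 0) := by
  refine tendsto_pi_nhds.2 fun i => tendsto_pi_nhds.2 fun j => ?_
  simpa [mulVec_single_one] using
    tendsto_pi_nhds.1 (tendsto_exp_smul_mulVec_atTop hA (Pi.single j 1)) i

theorem exists_isBigO_exp_smul_atTop {A : Matrix ι ι ℂ} (hA : ∀ z ∈ spectrum ℂ A, z.re < 0) :
    ∃ ε > 0, (fun τ : ℝ => exp (τ • A)) =O[atTop] fun τ => Real.exp (-ε * τ) := by
  obtain ⟨ε, hεA, hε⟩ : ∃ ε : ℝ, (∀ z ∈ spectrum ℂ A, z.re + ε < 0) ∧ 0 < ε := by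
    refine ((A.finite_spectrum.eventually_all.2 fun z hz => ?_).and
      self_mem_nhdsWithin).exists (f := 𝓝[>] (0 : ℝ))
    refine nhdsWithin_le_nhds (((continuous_const.add continuous_id).tendsto' 0 z.re
      (add_zero _)).eventually (eventually_lt_nhds (hA z hz)))
  -- `A + ε • 1` is still stable, and `exp (τ • (A + ε • 1)) = e^{ετ} • exp (τ • A)`.
  have hshift : ∀ z ∈ spectrum ℂ (A + (ε : ℂ) • 1), z.re < 0 := by
    rw [← Algebra.algebraMap_eq_smul_one, ← spectrum.add_singleton_eq]
    rintro _ ⟨z, hz, _, rfl, rfl⟩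
    simpa using hεA z hz
  have hexp (τ : ℝ) :
      exp (τ • A) = Complex.exp (-(τ * ε)) • exp (τ • (A + (ε : ℂ) • 1)) := by
    rw [smul_add, ← smul_assoc, Complex.real_smul, exp_add_smul_one, smul_smul, ← Complex.exp_add,
      neg_add_cancel, Complex.exp_zero, one_smul]
  refine ⟨ε, hε, ?_⟩
  obtain ⟨c, hc⟩ := ((tendsto_exp_smul_atTop hshift).isBigO_one ℝ).bound
  refine IsBigO.of_bound c ?_
  filter_upwards [hc] with τ hτ
  have hre : (-(τ * ε : ℂ)).re = -ε * τ := by simp [mul_comm]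
  rw [norm_one, mul_one] at hτ
  rw [hexp, norm_smul, Complex.norm_exp, hre, Real.norm_of_nonneg (Real.exp_pos _).le, mul_comm c]
  exact mul_le_mul_of_nonneg_left hτ (Real.exp_pos _).le

end Decay

section Sylvester

variable {m n : Type*} [Fintype m] [Fintype n] {A : Matrix m m ℂ} {B : Matrix n n ℂ}

variable (A B) in
noncomputable def sylvesterCLM : Matrix m n ℂ →L[ℂ] Matrix m n ℂ :=
  LinearMap.toContinuousLinearMap (mulLeftLinearMap n ℂ A + mulRightLinearMap m ℂ B)

theorem sylvesterCLM_apply (X : Matrix m n ℂ) : sylvesterCLM A B X = A * X + X * B := rfl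

variable [DecidableEq m] [DecidableEq n]

theorem exp_smul_mul_sylvesterCLM_mul_exp_smul (X : Matrix m n ℂ) (τ : ℝ) :
    exp (τ • A) * sylvesterCLM A B X * exp (τ • B) =
      sylvesterCLM A B (exp (τ • A) * X * exp (τ • B)) := by
  have hA : Commute (exp (τ • A)) A := ((Commute.refl A).smul_left τ).exp_left
  have hB : Commute B (exp (τ • B)) := ((Commute.refl B).smul_right τ).exp_right
  simp only [sylvesterCLM_apply, Matrix.mul_add, Matrix.add_mul, Matrix.mul_assoc]
  rw [← Matrix.mul_assoc (exp (τ • A)) A, hA.eq, Matrix.mul_assoc, hB.eq]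

theorem hasDerivAt_exp_smul_mul_mul_exp_smul (X : Matrix m n ℂ) (τ : ℝ) :
    HasDerivAt (fun τ : ℝ => exp (τ • A) * X * exp (τ • B))
      (sylvesterCLM A B (exp (τ • A) * X * exp (τ • B))) τ := by
  refine (((hasDerivAt_exp_smul_const' A τ).matrix_mul (hasDerivAt_const τ X)).matrix_mul
    (hasDerivAt_exp_smul_const B τ)).congr_deriv ?_
  rw [sylvesterCLM_apply, Matrix.mul_zero, zero_add]
  simp only [Matrix.mul_assoc]
  exact add_comm _ _

theorem exists_isBigO_exp_smul_mul_mul_exp_smul_atTop (hA : ∀ z ∈ spectrum ℂ A, z.re < 0)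
    (hB : ∀ z ∈ spectrum ℂ B, z.re < 0) (X : Matrix m n ℂ) :
    ∃ ε > 0, (fun τ : ℝ => exp (τ • A) * X * exp (τ • B)) =O[atTop]
      fun τ => Real.exp (-ε * τ) := by
  obtain ⟨ε₁, hε₁, h₁⟩ := exists_isBigO_exp_smul_atTop hA
  obtain ⟨ε₂, hε₂, h₂⟩ := exists_isBigO_exp_smul_atTop hB
  refine ⟨ε₁ + ε₂, add_pos hε₁ hε₂, ?_⟩
  have hprod : (fun τ : ℝ => exp (τ • A) * X * exp (τ • B)) =O[atTop]
      fun τ => ‖exp (τ • A)‖ * ‖exp (τ • B)‖ := by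
    refine IsBigO.of_bound ‖X‖ (Eventually.of_forall fun τ => ?_)
    calc ‖exp (τ • A) * X * exp (τ • B)‖ ≤ ‖exp (τ • A)‖ * ‖X‖ * ‖exp (τ • B)‖ :=
          (frobenius_norm_mul _ _).trans
            (mul_le_mul_of_nonneg_right (frobenius_norm_mul _ _) (norm_nonneg _))
      _ = ‖X‖ * ‖‖exp (τ • A)‖ * ‖exp (τ • B)‖‖ := by
          rw [Real.norm_of_nonneg (by positivity)]; ring
  refine hprod.trans ((h₁.norm_left.mul h₂.norm_left).congr_right fun τ => ?_)
  rw [← Real.exp_add]; ring_nf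

/- The Frobenius-norm topology is not reducibly the product topology on matrices, so the
`ContinuousENorm` instance has to be given explicitly. -/
theorem integrableOn_Ioi_exp_smul_mul_mul_exp_smul (hA : ∀ z ∈ spectrum ℂ A, z.re < 0)
    (hB : ∀ z ∈ spectrum ℂ B, z.re < 0) (X : Matrix m n ℂ) :
    @IntegrableOn _ _ _ _ SeminormedAddGroup.toContinuousENorm
      (fun τ : ℝ => exp (τ • A) * X * exp (τ • B)) (Ioi 0) volume := by
  obtain ⟨ε, hε, hO⟩ := exists_isBigO_exp_smul_mul_mul_exp_smul_atTop hA hB X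
  have hcont : Continuous fun τ : ℝ => exp (τ • A) * X * exp (τ • B) :=
    continuous_iff_continuousAt.2 fun τ =>
      (hasDerivAt_exp_smul_mul_mul_exp_smul (A := A) (B := B) X τ).continuousAt
  exact ((hcont.continuousOn.locallyIntegrableOn measurableSet_Ici).integrableOn_of_isBigO_atTop
    hO ⟨Ioi 0, Ioi_mem_atTop 0, exp_neg_integrableOn_Ioi 0 hε⟩).mono_set Ioi_subset_Ici_self

theorem tendsto_exp_smul_mul_mul_exp_smul_atTop (hA : ∀ z ∈ spectrum ℂ A, z.re < 0)
    (hB : ∀ z ∈ spectrum ℂ B, z.re < 0) (X : Matrix m n ℂ) :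
    Tendsto (fun τ : ℝ => exp (τ • A) * X * exp (τ • B)) atTop (𝓝 0) := by
  obtain ⟨ε, hε, hO⟩ := exists_isBigO_exp_smul_mul_mul_exp_smul_atTop hA hB X
  exact hO.trans_tendsto
    (Real.tendsto_exp_atBot.comp (tendsto_id.const_mul_atTop_of_neg (neg_lt_zero.2 hε)))

theorem sylvesterCLM_integral_exp_smul_mul_mul_exp_smul (hA : ∀ z ∈ spectrum ℂ A, z.re < 0)
    (hB : ∀ z ∈ spectrum ℂ B, z.re < 0) (C : Matrix m n ℂ) :
    sylvesterCLM A B (∫ τ in Ioi (0 : ℝ), exp (τ • A) * C * exp (τ • B)) = -C := by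
  have hint := integrableOn_Ioi_exp_smul_mul_mul_exp_smul hA hB C
  refine ((sylvesterCLM A B).integral_comp_comm hint).symm.trans ?_
  refine (integral_Ioi_of_hasDerivAt_of_tendsto'
    (fun τ _ => hasDerivAt_exp_smul_mul_mul_exp_smul C τ) ((sylvesterCLM A B).integrable_comp hint)
    (tendsto_exp_smul_mul_mul_exp_smul_atTop hA hB C)).trans ?_
  simp

theorem sylvesterCLM_injective (hA : ∀ z ∈ spectrum ℂ A, z.re < 0)
    (hB : ∀ z ∈ spectrum ℂ B, z.re < 0) : Function.Injective (sylvesterCLM A B) := by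
  refine (injective_iff_map_eq_zero _).2 fun Y hY => ?_
  have hderiv (τ : ℝ) : HasDerivAt (fun τ : ℝ => exp (τ • A) * Y * exp (τ • B)) 0 τ := by
    simpa [← exp_smul_mul_sylvesterCLM_mul_exp_smul, hY] using
      hasDerivAt_exp_smul_mul_mul_exp_smul (A := A) (B := B) Y τ
  have hconst (τ : ℝ) : exp (τ • A) * Y * exp (τ • B) = Y := by
    simpa using is_const_of_deriv_eq_zero (fun τ => (hderiv τ).differentiableAt)
      (fun τ => (hderiv τ).deriv) τ 0
  exact tendsto_nhds_unique tendsto_const_nhds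
    ((tendsto_exp_smul_mul_mul_exp_smul_atTop hA hB Y).congr hconst)

end Sylvester

end Matrix

theorem stmt_1 {m n : ℕ}
    (A : Matrix (Fin m) (Fin m) ℂ) (B : Matrix (Fin n) (Fin n) ℂ)
    (C : Matrix (Fin m) (Fin n) ℂ)
    (hA : ∀ z ∈ spectrum ℂ A, z.re < 0)
    (hB : ∀ z ∈ spectrum ℂ B, z.re < 0)
    (Ω : Matrix (Fin m) (Fin n) ℂ)
    (hΩ : Ω = ∫ τ in Set.Ioi (0 : ℝ),
        NormedSpace.exp (τ • A) * C * NormedSpace.exp (τ • B)) :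
    @IntegrableOn _ _ _ _ SeminormedAddGroup.toContinuousENorm
        (fun τ : ℝ => NormedSpace.exp (τ • A) * C * NormedSpace.exp (τ • B))
        (Set.Ioi 0) volume ∧
      A * Ω + Ω * B + C = 0 ∧
      ∀ X : Matrix (Fin m) (Fin n) ℂ, A * X + X * B + C = 0 → X = Ω := by
  have hΩC : sylvesterCLM A B Ω = -C :=
    hΩ ▸ sylvesterCLM_integral_exp_smul_mul_mul_exp_smul hA hB C
  refine ⟨integrableOn_Ioi_exp_smul_mul_mul_exp_smul hA hB C, ?_, fun X hX => ?_⟩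
  · rw [← sylvesterCLM_apply, hΩC, neg_add_cancel]
  · refine sylvesterCLM_injective hA hB ?_
    rw [hΩC, sylvesterCLM_apply, eq_neg_of_add_eq_zero_left hX]
end

section
/- Let {A, B, C, D} be a stable dissipative realization with A of size n×n and D of size m×m, and define Θ(s) = D + C(sI − A)^{-1}B. Then for every real ω, the matrix iωI − A is invertible and Θ(iω) is a unitary m×m matrix. -/
open Matrix

theorem stmt_2 {n m : ℕ}
    (A : Matrix (Fin n) (Fin n) ℂ) (B : Matrix (Fin n) (Fin m) ℂ)
    (C : Matrix (Fin m) (Fin n) ℂ) (D : Matrix (Fin m) (Fin m) ℂ)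
    (h : IsStableDissipative A B C D)
    (Θ : ℂ → Matrix (Fin m) (Fin m) ℂ)
    (hΘ : ∀ s : ℂ, Θ s = D + C * (s • (1 : Matrix (Fin n) (Fin n) ℂ) - A)⁻¹ * B)
    (ω : ℝ) :
    IsUnit ((Complex.I * ω) • (1 : Matrix (Fin n) (Fin n) ℂ) - A) ∧
      (Θ (Complex.I * ω))ᴴ * Θ (Complex.I * ω) = 1 ∧
      Θ (Complex.I * ω) * (Θ (Complex.I * ω))ᴴ = 1 := by
  obtain ⟨hspec, hdiss, hD, hB⟩ := h
  set s : ℂ := Complex.I * ω with hs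
  set M : Matrix (Fin n) (Fin n) ℂ := s • 1 - A with hM
  have hsre : s.re = 0 := by simp [hs]
  have hMunit : IsUnit M := by
    by_contra hcon
    have hmem : s ∈ spectrum ℂ A := by
      rw [spectrum.mem_iff, Algebra.algebraMap_eq_smul_one]
      exact hcon
    have := hspec s hmem
    rw [hsre] at this
    exact lt_irrefl 0 this
  have hdet : IsUnit M.det := (Matrix.isUnit_iff_isUnit_det M).mp hMunit
  have hdetH : IsUnit Mᴴ.det := by
    rw [Matrix.det_conjTranspose]; exact hdet.star
  have hMinv : M⁻¹ * M = 1 := Matrix.nonsing_inv_mul M hdet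
  have hMinv' : M * M⁻¹ = 1 := Matrix.mul_nonsing_inv M hdet
  have hMHinv : (Mᴴ)⁻¹ * Mᴴ = 1 := Matrix.nonsing_inv_mul _ hdetH
  have hMHinv' : Mᴴ * (Mᴴ)⁻¹ = 1 := Matrix.mul_nonsing_inv _ hdetH
  have hstar : star s = -s := by
    rw [hs]
    simp [Complex.star_def, Complex.conj_I, Complex.conj_ofReal]
  have hMH : Mᴴ = (-s) • 1 - Aᴴ := by
    rw [hM, Matrix.conjTranspose_sub, Matrix.conjTranspose_smul,
      Matrix.conjTranspose_one, hstar]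
  have hkey : Cᴴ * C = M + Mᴴ := by
    have h1 : Cᴴ * C = -(A + Aᴴ) := eq_neg_of_add_eq_zero_right hdiss
    rw [h1, hM, hMH, neg_smul]
    abel
  have hΘeq0 : Θ s = D + C * M⁻¹ * B := by rw [hΘ s, ← hM]
  clear_value M
  clear hM
  set X : Matrix (Fin m) (Fin m) ℂ := C * M⁻¹ * Cᴴ with hX
  clear_value X
  have hXH : Xᴴ = C * (Mᴴ)⁻¹ * Cᴴ := by
    rw [hX, Matrix.conjTranspose_mul, Matrix.conjTranspose_mul,
      Matrix.conjTranspose_conjTranspose, Matrix.conjTranspose_nonsing_inv]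
    exact (Matrix.mul_assoc _ _ _).symm
  have e2 : (Mᴴ)⁻¹ * (Cᴴ * C) * M⁻¹ = (Mᴴ)⁻¹ + M⁻¹ := by
    rw [hkey, mul_add, add_mul, hMHinv, one_mul, mul_assoc, hMinv', mul_one]
  have hXX : Xᴴ * X = Xᴴ + X := by
    have e1 : Xᴴ * X = C * ((Mᴴ)⁻¹ * (Cᴴ * C) * M⁻¹) * Cᴴ := by
      rw [hXH, hX]
      simp only [Matrix.mul_assoc]
    rw [e1, e2, Matrix.mul_add, Matrix.add_mul, ← hXH, hX]
  have hmid : (1 - Xᴴ) * (1 - X) = 1 := by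
    have e3 : (1 - Xᴴ) * (1 - X) = 1 - Xᴴ - X + Xᴴ * X := by noncomm_ring
    rw [e3, hXX]
    abel
  have hΘeq : Θ s = (1 - X) * D := by
    rw [hΘeq0, hB, hX]
    simp only [sub_eq_add_neg, Matrix.mul_neg, Matrix.add_mul, Matrix.neg_mul,
      Matrix.one_mul, Matrix.mul_assoc]
  have hΘH : (Θ s)ᴴ = Dᴴ * (1 - Xᴴ) := by
    rw [hΘeq, Matrix.conjTranspose_mul, Matrix.conjTranspose_sub,
      Matrix.conjTranspose_one]
  have hunit : (Θ s)ᴴ * Θ s = 1 := by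
    rw [hΘH, hΘeq, show Dᴴ * (1 - Xᴴ) * ((1 - X) * D) = Dᴴ * ((1 - Xᴴ) * (1 - X)) * D by
      simp only [Matrix.mul_assoc], hmid, mul_one, hD]
  exact ⟨hMunit, hunit, mul_eq_one_comm.mp hunit⟩
end

section
/- Let {A, B, C, D} be a stable dissipative realization with A of size n×n and D of size m×m, and define Θ(s) = D + C(sI − A)^{-1}B. Then for every complex s with Re(s) > 0, the matrix sI − A is invertible and Θ(s) is a contraction, i.e., I − Θ(s)*Θ(s) is positive semidefinite. -/
open Matrix
open scoped ComplexOrder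

theorem stmt_3 {n m : ℕ}
    (A : Matrix (Fin n) (Fin n) ℂ) (B : Matrix (Fin n) (Fin m) ℂ)
    (C : Matrix (Fin m) (Fin n) ℂ) (D : Matrix (Fin m) (Fin m) ℂ)
    (h : IsStableDissipative A B C D)
    (Θ : ℂ → Matrix (Fin m) (Fin m) ℂ)
    (hΘ : ∀ s : ℂ, Θ s = D + C * (s • (1 : Matrix (Fin n) (Fin n) ℂ) - A)⁻¹ * B)
    (s : ℂ) (hs : 0 < s.re) :
    IsUnit (s • (1 : Matrix (Fin n) (Fin n) ℂ) - A) ∧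
      ((1 : Matrix (Fin m) (Fin m) ℂ) - (Θ s)ᴴ * Θ s).PosSemidef := by
  obtain ⟨hspec, hA, hD, hB⟩ := h
  set M : Matrix (Fin n) (Fin n) ℂ := s • (1 : Matrix (Fin n) (Fin n) ℂ) - A with hMdef
  have hMunit : IsUnit M := by
    by_contra hc
    have hmem : s ∈ spectrum ℂ A := by
      rw [spectrum.mem_iff]
      rwa [Algebra.algebraMap_eq_smul_one]
    linarith [hspec s hmem]
  refine ⟨hMunit, ?_⟩
  set G : Matrix (Fin n) (Fin n) ℂ := M⁻¹ with hGdef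
  have hMG : M * G = 1 := mul_nonsing_inv M (Matrix.isUnit_iff_isUnit_det M |>.mp hMunit)
  have hGM : G * M = 1 := nonsing_inv_mul M (Matrix.isUnit_iff_isUnit_det M |>.mp hMunit)
  have hGhMh : Gᴴ * Mᴴ = 1 := by rw [← conjTranspose_mul, hMG, conjTranspose_one]
  have hMhGh : Mᴴ * Gᴴ = 1 := by rw [← conjTranspose_mul, hGM, conjTranspose_one]
  have hsum : Mᴴ + M - Cᴴ * C = ((2 * s.re : ℝ) : ℂ) • (1 : Matrix (Fin n) (Fin n) ℂ) := by
    have hAh : Aᴴ + A + Cᴴ * C = 0 := by rw [← hA]; abel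
    have hMh : Mᴴ = (starRingEnd ℂ s) • (1 : Matrix (Fin n) (Fin n) ℂ) - Aᴴ := by
      simp [hMdef, conjTranspose_smul]
    rw [hMh, hMdef]
    have h1 : (starRingEnd ℂ s) • (1 : Matrix (Fin n) (Fin n) ℂ) - Aᴴ +
        (s • 1 - A) - Cᴴ * C
        = ((starRingEnd ℂ s + s) • (1 : Matrix (Fin n) (Fin n) ℂ)) - (Aᴴ + A + Cᴴ * C) := by
      rw [add_smul]; abel
    rw [h1, hAh, sub_zero]
    congr 1
    rw [add_comm]
    simpa using Complex.add_conj s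
  have hkey : G + Gᴴ - Gᴴ * (Cᴴ * C) * G
      = ((2 * s.re : ℝ) : ℂ) • (Gᴴ * G) := by
    have h1 : Gᴴ * (Mᴴ + M - Cᴴ * C) * G = G + Gᴴ - Gᴴ * (Cᴴ * C) * G := by
      simp only [Matrix.mul_sub, Matrix.mul_add, Matrix.sub_mul, Matrix.add_mul]
      rw [hGhMh, Matrix.one_mul, Matrix.mul_assoc Gᴴ M G, hMG, Matrix.mul_one,
        Matrix.mul_assoc]
    rw [← h1, hsum, Matrix.mul_smul, Matrix.smul_mul, Matrix.mul_one]
  have hΘs : Θ s = (1 - C * G * Cᴴ) * D := by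
    rw [hΘ s, hB, ← hMdef, ← hGdef, Matrix.sub_mul, Matrix.one_mul, Matrix.mul_neg,
      Matrix.mul_assoc (C * G) Cᴴ D]
    abel
  have hmid : C * (G + Gᴴ - Gᴴ * (Cᴴ * C) * G) * Cᴴ
      = ((2 * s.re : ℝ) : ℂ) • (C * (Gᴴ * G) * Cᴴ) := by
    rw [hkey, Matrix.mul_smul, Matrix.smul_mul]
  have hfact : (1 : Matrix (Fin m) (Fin m) ℂ) - (Θ s)ᴴ * Θ s
      = ((2 * s.re : ℝ) : ℂ) • (Dᴴ * (C * (Gᴴ * G) * Cᴴ) * D) := by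
    rw [hΘs]
    have expand : ((1 - C * G * Cᴴ) * D)ᴴ * ((1 - C * G * Cᴴ) * D)
        = Dᴴ * D - Dᴴ * (C * (G + Gᴴ - Gᴴ * (Cᴴ * C) * G) * Cᴴ) * D := by
      simp only [conjTranspose_mul, conjTranspose_sub, conjTranspose_one,
        conjTranspose_conjTranspose]
      simp only [Matrix.mul_sub, Matrix.sub_mul, Matrix.mul_add, Matrix.add_mul,
        Matrix.mul_assoc, Matrix.one_mul, Matrix.mul_one]
      abel
    rw [expand, hD, hmid, Matrix.mul_smul, Matrix.smul_mul]
    abel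
  set c : ℂ := ((Real.sqrt (2 * s.re) : ℝ) : ℂ) with hc
  set K : Matrix (Fin n) (Fin m) ℂ := c • (G * (Cᴴ * D)) with hK
  have hKK : Kᴴ * K = (1 : Matrix (Fin m) (Fin m) ℂ) - (Θ s)ᴴ * Θ s := by
    rw [hfact, hK, conjTranspose_smul, Matrix.smul_mul, Matrix.mul_smul, smul_smul]
    have hcc : star c * c = ((2 * s.re : ℝ) : ℂ) := by
      rw [hc, Complex.star_def, Complex.conj_ofReal, ← Complex.ofReal_mul,
        Real.mul_self_sqrt (by positivity)]
    rw [hcc]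
    congr 1
    simp only [conjTranspose_mul, conjTranspose_conjTranspose, Matrix.mul_assoc]
  rw [← hKK]
  exact posSemidef_conjTranspose_mul_self K
end

section
/- Let A be an n×n complex matrix such that every eigenvalue of A has negative real part, and let C be a nonzero 1×n complex row vector with A + A* + C*C = 0 (so A + A* has rank one). Let φ be a finite Blaschke product of degree strictly less than n, and let x be a nonzero vector in ℂⁿ satisfying x = φ(−A*)*φ(−A*)x. Then for every complex s with Re(s) > 0, the scalar identity φ(s)·C(sI − A)^{-1}x = C(sI − A)^{-1}φ(−A*)x holds. -/
open Matrix

/-- Evaluation of the finite Blaschke product with data `(ρ, α)` at a complex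
number `s`: `ρ * ∏ k (s + conj (α k)) / (s - α k)`. -/
noncomputable def blaschkeEval {d : ℕ} (ρ : ℂ) (α : Fin d → ℂ) (s : ℂ) : ℂ :=
  ρ * ∏ k : Fin d, (s + starRingEnd ℂ (α k)) / (s - α k)

/-- Evaluation of the finite Blaschke product with data `(ρ, α)` at a square
complex matrix `M`: `ρ • ∏ k (M + conj (α k) • 1) * (M - α k • 1)⁻¹`. -/
noncomputable def blaschkeEvalM {n d : ℕ} (ρ : ℂ) (α : Fin d → ℂ)
    (M : Matrix (Fin n) (Fin n) ℂ) : Matrix (Fin n) (Fin n) ℂ :=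
  ρ • (List.ofFn fun k : Fin d =>
      (M + (starRingEnd ℂ (α k)) • (1 : Matrix (Fin n) (Fin n) ℂ)) *
        (M - (α k) • (1 : Matrix (Fin n) (Fin n) ℂ))⁻¹).prod

/-! With `B = -Aᴴ` the dissipation equation reads `B + Bᴴ = CᴴC`, and each Blaschke factor
`f_a(B) = (B + āI)(B - aI)⁻¹` satisfies the Gram identity
`(f_a(B) z)ᴴ (f_a(B) z) = zᴴz + 2 Re a · (Cu)ᴴ(Cu)` with `u = (B - aI)⁻¹z`.
As `Re a < 0`, every factor is a contraction in the Loewner order, so the hypothesis on `x`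
(which says `‖φ(B)x‖ = ‖x‖`, since `|ρ| = 1`) forces `Cu = 0` at every factor.
On vectors `y` with `Cy = 0` the dissipation equation gives
`C(sI - A)⁻¹(B - λI)y = (s - λ) C(sI - A)⁻¹y`, so each factor acts after `C(sI - A)⁻¹` as
multiplication by `(s + ā)/(s - a)`. -/

open scoped ComplexOrder MatrixOrder

section Blaschke

variable {ι κ ν : Type*} [Fintype ι] [DecidableEq ι] [Fintype κ]

noncomputable def blaschkeFactorM (B : Matrix ι ι ℂ) (a : ℂ) : Matrix ι ι ℂ :=
  (B + starRingEnd ℂ a • 1) * (B - a • 1)⁻¹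

lemma conjTranspose_mul_self_blaschkeFactorM_mul {B : Matrix ι ι ℂ} {C : Matrix κ ι ℂ}
    (hB : B + Bᴴ = Cᴴ * C) {a : ℂ} (ha : IsUnit (B - a • 1).det) (z : Matrix ι ν ℂ) :
    (blaschkeFactorM B a * z)ᴴ * (blaschkeFactorM B a * z) =
      zᴴ * z + (2 * a.re) • ((C * ((B - a • 1)⁻¹ * z))ᴴ * (C * ((B - a • 1)⁻¹ * z))) := by
  set u := (B - a • 1)⁻¹ * z
  have hz : z = (B - a • 1) * u := (mul_nonsing_inv_cancel_left _ _ ha).symm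
  have hgram : (B + starRingEnd ℂ a • 1)ᴴ * (B + starRingEnd ℂ a • 1) =
      (B - a • 1)ᴴ * (B - a • 1) + (2 * a.re) • (Cᴴ * C) := by
    rw [← hB, ← Complex.coe_smul, ← Complex.add_conj]
    simp only [conjTranspose_add, conjTranspose_sub, conjTranspose_smul, conjTranspose_one,
      Complex.star_def, Complex.conj_conj, add_mul, mul_add, sub_mul, mul_sub,
      Matrix.smul_mul, Matrix.mul_smul, smul_smul, mul_one, one_mul]
    module
  calc (blaschkeFactorM B a * z)ᴴ * (blaschkeFactorM B a * z)
      = uᴴ * ((B + starRingEnd ℂ a • 1)ᴴ * (B + starRingEnd ℂ a • 1) * u) := by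
        simp only [blaschkeFactorM, u, conjTranspose_mul, Matrix.mul_assoc]
    _ = zᴴ * z + (2 * a.re) • ((C * u)ᴴ * (C * u)) := by
        rw [hgram, hz]
        simp only [conjTranspose_mul, Matrix.add_mul, Matrix.mul_add, Matrix.smul_mul,
          Matrix.mul_smul, Matrix.mul_assoc]

lemma conjTranspose_mul_self_blaschkeFactorM_mul_le [Fintype ν] {B : Matrix ι ι ℂ}
    {C : Matrix κ ι ℂ} (hB : B + Bᴴ = Cᴴ * C) {a : ℂ} (ha : IsUnit (B - a • 1).det)
    (hre : a.re ≤ 0) (z : Matrix ι ν ℂ) :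
    (blaschkeFactorM B a * z)ᴴ * (blaschkeFactorM B a * z) ≤ zᴴ * z := by
  rw [conjTranspose_mul_self_blaschkeFactorM_mul hB ha, le_iff, sub_add_cancel_left, ← neg_smul]
  exact (posSemidef_conjTranspose_mul_self _).smul (by linarith)

lemma mul_inv_mul_eq_zero_of_conjTranspose_mul_self_blaschkeFactorM_mul_eq [Fintype ν]
    {B : Matrix ι ι ℂ} {C : Matrix κ ι ℂ} (hB : B + Bᴴ = Cᴴ * C) {a : ℂ}
    (ha : IsUnit (B - a • 1).det) (hre : a.re ≠ 0) {z : Matrix ι ν ℂ}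
    (h : (blaschkeFactorM B a * z)ᴴ * (blaschkeFactorM B a * z) = zᴴ * z) :
    C * ((B - a • 1)⁻¹ * z) = 0 := by
  rw [conjTranspose_mul_self_blaschkeFactorM_mul hB ha, add_eq_left, smul_eq_zero] at h
  exact conjTranspose_mul_self_eq_zero.mp (h.resolve_left (by simpa using hre))

lemma conjTranspose_mul_self_list_prod_blaschkeFactorM_mul_le [Fintype ν] {B : Matrix ι ι ℂ}
    {C : Matrix κ ι ℂ} (hB : B + Bᴴ = Cᴴ * C) {l : List ℂ}
    (hl : ∀ a ∈ l, a.re < 0 ∧ IsUnit (B - a • 1).det) (x : Matrix ι ν ℂ) :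
    ((l.map (blaschkeFactorM B)).prod * x)ᴴ * ((l.map (blaschkeFactorM B)).prod * x) ≤
      xᴴ * x := by
  induction l with
  | nil => simp
  | cons a t ih =>
    obtain ⟨hre, ha⟩ := hl a List.mem_cons_self
    rw [List.map_cons, List.prod_cons, Matrix.mul_assoc]
    exact (conjTranspose_mul_self_blaschkeFactorM_mul_le hB ha hre.le _).trans
      (ih fun b hb => hl b (List.mem_cons_of_mem a hb))

variable {A : Matrix ι ι ℂ} {C : Matrix κ ι ℂ} {s : ℂ}

lemma mul_resolvent_mul_neg_conjTranspose_sub_smul (hA : A + Aᴴ + Cᴴ * C = 0)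
    (hs : IsUnit (s • 1 - A).det) {y : Matrix ι ν ℂ} (hy : C * y = 0) (μ : ℂ) :
    C * (s • 1 - A)⁻¹ * ((-Aᴴ - μ • 1) * y) = (s - μ) • (C * (s • 1 - A)⁻¹ * y) := by
  have hsplit : -Aᴴ - μ • 1 = (s - μ) • 1 - (s • 1 - A) + Cᴴ * C := by
    rw [← sub_eq_zero, ← neg_eq_zero, ← hA]
    module
  rw [hsplit, Matrix.add_mul, Matrix.sub_mul, Matrix.smul_mul, Matrix.one_mul, Matrix.mul_add,
    Matrix.mul_sub, Matrix.mul_smul, Matrix.mul_assoc C _ ((s • 1 - A) * y),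
    nonsing_inv_mul_cancel_left _ _ hs, hy, Matrix.mul_assoc Cᴴ, hy, Matrix.mul_zero,
    Matrix.mul_zero, sub_zero, add_zero]

lemma mul_resolvent_mul_blaschkeFactorM (hA : A + Aᴴ + Cᴴ * C = 0)
    (hs : IsUnit (s • 1 - A).det) {a : ℂ} (ha : IsUnit (-Aᴴ - a • 1).det) (hsa : s ≠ a)
    {z : Matrix ι ν ℂ} (hz : C * ((-Aᴴ - a • 1)⁻¹ * z) = 0) :
    C * (s • 1 - A)⁻¹ * (blaschkeFactorM (-Aᴴ) a * z) =
      ((s + starRingEnd ℂ a) / (s - a)) • (C * (s • 1 - A)⁻¹ * z) := by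
  set y := (-Aᴴ - a • 1)⁻¹ * z
  have hfz : blaschkeFactorM (-Aᴴ) a * z = (-Aᴴ - (-starRingEnd ℂ a) • 1) * y := by
    rw [blaschkeFactorM, neg_smul, sub_neg_eq_add, Matrix.mul_assoc]
  have hzy : z = (-Aᴴ - a • 1) * y := (mul_nonsing_inv_cancel_left _ _ ha).symm
  rw [hfz, mul_resolvent_mul_neg_conjTranspose_sub_smul hA hs hz]
  conv_rhs => rw [hzy, mul_resolvent_mul_neg_conjTranspose_sub_smul hA hs hz]
  rw [smul_smul, sub_neg_eq_add, div_mul_cancel₀ _ (sub_ne_zero.mpr hsa)]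

lemma mul_resolvent_mul_list_prod_blaschkeFactorM [Fintype ν] (hA : A + Aᴴ + Cᴴ * C = 0)
    (hs : IsUnit (s • 1 - A).det) {l : List ℂ}
    (hl : ∀ a ∈ l, a.re < 0 ∧ IsUnit (-Aᴴ - a • 1).det ∧ s ≠ a) {x : Matrix ι ν ℂ}
    (hx : ((l.map (blaschkeFactorM (-Aᴴ))).prod * x)ᴴ *
      ((l.map (blaschkeFactorM (-Aᴴ))).prod * x) = xᴴ * x) :
    C * (s • 1 - A)⁻¹ * ((l.map (blaschkeFactorM (-Aᴴ))).prod * x) =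
      (l.map fun a => (s + starRingEnd ℂ a) / (s - a)).prod • (C * (s • 1 - A)⁻¹ * x) := by
  have hB : -Aᴴ + (-Aᴴ)ᴴ = Cᴴ * C := by
    rw [← neg_add_eq_zero, ← hA]
    simp only [conjTranspose_neg, conjTranspose_conjTranspose]
    abel
  induction l with
  | nil => simp
  | cons a t ih =>
    obtain ⟨hre, ha, hsa⟩ := hl a List.mem_cons_self
    have ht := fun b hb => hl b (List.mem_cons_of_mem a hb)
    set z := (t.map (blaschkeFactorM (-Aᴴ))).prod * x
    have hcons :
        ((a :: t).map (blaschkeFactorM (-Aᴴ))).prod * x = blaschkeFactorM (-Aᴴ) a * z := by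
      rw [List.map_cons, List.prod_cons, Matrix.mul_assoc]
    rw [hcons] at hx ⊢
    have hzx : zᴴ * z ≤ xᴴ * x :=
      conjTranspose_mul_self_list_prod_blaschkeFactorM_mul_le hB
        (fun b hb => ⟨(ht b hb).1, (ht b hb).2.1⟩) x
    have hfz : (blaschkeFactorM (-Aᴴ) a * z)ᴴ * (blaschkeFactorM (-Aᴴ) a * z) = zᴴ * z :=
      (conjTranspose_mul_self_blaschkeFactorM_mul_le hB ha hre.le z).antisymm (hx ▸ hzx)
    rw [mul_resolvent_mul_blaschkeFactorM hA hs ha hsa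
      (mul_inv_mul_eq_zero_of_conjTranspose_mul_self_blaschkeFactorM_mul_eq hB ha hre.ne hfz),
      ih ht (hfz ▸ hx), List.map_cons, List.prod_cons, smul_smul]

lemma isUnit_det_smul_one_sub (hA : ∀ z ∈ spectrum ℂ A, z.re < 0) {w : ℂ} (hw : 0 ≤ w.re) :
    IsUnit (w • 1 - A).det := by
  rw [← isUnit_iff_isUnit_det, ← Algebra.algebraMap_eq_smul_one]
  exact spectrum.notMem_iff.mp fun h => (hA w h).not_ge hw

lemma isUnit_det_neg_conjTranspose_sub_smul_one (hA : ∀ z ∈ spectrum ℂ A, z.re < 0) {a : ℂ}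
    (ha : a.re ≤ 0) : IsUnit (-Aᴴ - a • 1).det := by
  have h : -Aᴴ - a • 1 = ((-starRingEnd ℂ a) • 1 - A)ᴴ := by
    rw [conjTranspose_sub, conjTranspose_smul, conjTranspose_one, star_neg, Complex.star_def,
      Complex.conj_conj, neg_smul]
    abel
  rw [h, det_conjTranspose]
  exact (isUnit_det_smul_one_sub hA (by simpa using ha)).star

end Blaschke

lemma blaschkeEvalM_eq_smul_list_prod {n d : ℕ} (ρ : ℂ) (α : Fin d → ℂ)
    (M : Matrix (Fin n) (Fin n) ℂ) :
    blaschkeEvalM ρ α M = ρ • ((List.ofFn α).map (blaschkeFactorM M)).prod := by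
  rw [blaschkeEvalM, List.map_ofFn]
  rfl

lemma blaschkeEval_eq_mul_list_prod {d : ℕ} (ρ : ℂ) (α : Fin d → ℂ) (s : ℂ) :
    blaschkeEval ρ α s =
      ρ * ((List.ofFn α).map fun a => (s + starRingEnd ℂ a) / (s - a)).prod := by
  rw [blaschkeEval, List.map_ofFn, List.prod_ofFn]
  rfl

theorem stmt_6_general {n d : ℕ}
    (A : Matrix (Fin n) (Fin n) ℂ)
    (hstab : ∀ z ∈ spectrum ℂ A, z.re < 0)
    (C : Matrix (Fin 1) (Fin n) ℂ)
    (hdiss : A + Aᴴ + Cᴴ * C = 0)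
    (ρ : ℂ) (hρ : ‖ρ‖ = 1)
    (α : Fin d → ℂ) (hα : ∀ k, (α k).re < 0)
    (x : Matrix (Fin n) (Fin 1) ℂ)
    (hfix : x = (blaschkeEvalM ρ α (-Aᴴ))ᴴ * blaschkeEvalM ρ α (-Aᴴ) * x) :
    ∀ s : ℂ, 0 < s.re →
      blaschkeEval ρ α s • (C * (s • (1 : Matrix (Fin n) (Fin n) ℂ) - A)⁻¹ * x) =
        C * (s • (1 : Matrix (Fin n) (Fin n) ℂ) - A)⁻¹ * blaschkeEvalM ρ α (-Aᴴ) * x := by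
  intro s hs
  have hl : ∀ a ∈ List.ofFn α, a.re < 0 ∧ IsUnit (-Aᴴ - a • 1).det ∧ s ≠ a := by
    intro a ha
    obtain ⟨k, rfl⟩ := List.mem_ofFn.mp ha
    exact ⟨hα k, isUnit_det_neg_conjTranspose_sub_smul_one hstab (hα k).le,
      fun h => (hα k).not_gt (h ▸ hs)⟩
  set P := ((List.ofFn α).map (blaschkeFactorM (-Aᴴ))).prod
  have hM : blaschkeEvalM ρ α (-Aᴴ) = ρ • P := blaschkeEvalM_eq_smul_list_prod ρ α _
  have hconj : starRingEnd ℂ ρ * ρ = 1 := by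
    rw [mul_comm, Complex.mul_conj, Complex.normSq_eq_norm_sq, hρ]
    norm_num
  have hPx : (P * x)ᴴ * (P * x) = xᴴ * x := by
    set M := blaschkeEvalM ρ α (-Aᴴ)
    calc (P * x)ᴴ * (P * x) = (M * x)ᴴ * (M * x) := by
          rw [hM, Matrix.smul_mul, conjTranspose_smul, Matrix.smul_mul, Matrix.mul_smul,
            smul_smul, Complex.star_def, hconj, one_smul]
      _ = xᴴ * (Mᴴ * M * x) := by simp only [conjTranspose_mul, Matrix.mul_assoc]
      _ = xᴴ * x := by rw [← hfix]
  rw [hM, blaschkeEval_eq_mul_list_prod, Matrix.mul_smul, Matrix.smul_mul, Matrix.mul_assoc _ P x,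
    mul_resolvent_mul_list_prod_blaschkeFactorM hdiss (isUnit_det_smul_one_sub hstab hs.le) hl
      hPx, smul_smul]

theorem stmt_6 {n d : ℕ}
    (A : Matrix (Fin n) (Fin n) ℂ)
    (hstab : ∀ z ∈ spectrum ℂ A, z.re < 0)
    (C : Matrix (Fin 1) (Fin n) ℂ) (hC : C ≠ 0)
    (hdiss : A + Aᴴ + Cᴴ * C = 0)
    (ρ : ℂ) (hρ : ‖ρ‖ = 1)
    (α : Fin d → ℂ) (hα : ∀ k, (α k).re < 0)
    (hdeg : d < n)
    (x : Matrix (Fin n) (Fin 1) ℂ) (hx : x ≠ 0)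
    (hfix : x = (blaschkeEvalM ρ α (-Aᴴ))ᴴ * blaschkeEvalM ρ α (-Aᴴ) * x) :
    ∀ s : ℂ, 0 < s.re →
      blaschkeEval ρ α s • (C * (s • (1 : Matrix (Fin n) (Fin n) ℂ) - A)⁻¹ * x) =
        C * (s • (1 : Matrix (Fin n) (Fin n) ℂ) - A)⁻¹ * blaschkeEvalM ρ α (-Aᴴ) * x :=
  stmt_6_general A hstab C hdiss ρ hρ α hα x hfix
end

section
/- Let A be an n×n complex matrix such that every eigenvalue of A has negative real part and A + A* is negative semidefinite, and let φ be a finite Blaschke product of degree d with d ≥ n. Then the matrix I − φ(−A)*φ(−A) is invertible; equivalently, φ(−A)*φ(−A) does not have 1 as an eigenvalue, and the defect index of φ(−A) equals n. -/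
/-!
Put `M = -A`, so that `M + Mᴴ ⪰ 0` and the spectrum of `M` lies in the open right half-plane,
and write `φ(M) = ρ • Q(M) P(M)⁻¹` with `P = ∏ (X - αₖ)` and `Q = ∏ (X + conj αₖ)`.
For a single factor, `‖(M - a)y‖² - ‖(M + conj a)y‖² = -2 Re a ⟪y, (M + Mᴴ) y⟫ ≥ 0`; peeling
the factors off one at a time shows that `‖φ(M) x‖ = ‖x‖` with `x = P(M) w` forces
`(M + Mᴴ) p(M) w = 0` for every polynomial `p` of degree `< d`. By Cayley–Hamilton this holds for
every `p` once `d ≥ n`, so `w` lies in an `M`-invariant subspace on which `M + Mᴴ` vanishes. An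
eigenvector of `M` there would have a purely imaginary eigenvalue, so `w = 0`. Hence
`1 - φ(M)ᴴ φ(M)` has trivial kernel.
-/

open Matrix Polynomial ComplexConjugate
open scoped ComplexOrder

section LinearMapOnPolynomials

variable {K V : Type*} [Field K] [AddCommGroup V] [Module K V]

lemma map_eq_eval_smul_map_one_of_degree_le (f : K[X] →ₗ[K] V) (c : K) (m : ℕ)
    (hf : ∀ q : K[X], q.degree < m → f (q * (X - C c)) = 0)
    {p : K[X]} (hp : p.degree ≤ m) : f p = p.eval c • f 1 := by
  have hdiv : (p /ₘ (X - C c)).degree < m := by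
    rcases eq_or_ne p 0 with rfl | hp0
    · simp
    · exact (degree_divByMonic_lt p _ hp0 (by rw [degree_X_sub_C]; exact zero_lt_one)).trans_le hp
  conv_lhs => rw [← modByMonic_add_div p (X - C c), modByMonic_X_sub_C_eq_C_eval, mul_comm]
  rw [map_add, hf _ hdiv, add_zero, ← mul_one (C _), ← smul_eq_C_mul, map_smul]

lemma map_eq_zero_of_degree_le_of_eval_ne_zero (f : K[X] →ₗ[K] V) (c : K) (m : ℕ)
    (hf : ∀ q : K[X], q.degree < m → f (q * (X - C c)) = 0)
    {r : K[X]} (hr : r.degree ≤ m) (hrc : r.eval c ≠ 0) (hfr : f r = 0)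
    {p : K[X]} (hp : p.degree ≤ m) : f p = 0 := by
  have h1 : f 1 = 0 := by
    rw [map_eq_eval_smul_map_one_of_degree_le f c m hf hr] at hfr
    exact (smul_eq_zero.mp hfr).resolve_left hrc
  rw [map_eq_eval_smul_map_one_of_degree_le f c m hf hp, h1, smul_zero]

end LinearMapOnPolynomials

noncomputable def blaschkeNum (L : List ℂ) : ℂ[X] := (L.map fun a => X + C (conj a)).prod

noncomputable def blaschkeDen (L : List ℂ) : ℂ[X] := (L.map fun a => X - C a).prod

lemma degree_blaschkeDen (L : List ℂ) : (blaschkeDen L).degree = L.length := by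
  induction L with
  | nil => simp [blaschkeDen]
  | cons a L ih =>
    rw [blaschkeDen, List.map_cons, List.prod_cons, degree_mul, ← blaschkeDen, ih, degree_X_sub_C,
      List.length_cons, Nat.cast_succ, add_comm]

lemma eval_blaschkeDen_ne_zero {L : List ℂ} (hL : ∀ a ∈ L, a.re < 0) {c : ℂ} (hc : 0 ≤ c.re) :
    (blaschkeDen L).eval c ≠ 0 := by
  rw [blaschkeDen, eval_list_prod, List.map_map]
  refine List.prod_ne_zero fun h => ?_
  obtain ⟨a, ha, hca⟩ := List.mem_map.mp h
  have hre := congrArg Complex.re hca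
  simp only [Function.comp_apply, eval_sub, eval_X, eval_C, Complex.sub_re,
    Complex.zero_re] at hre
  linarith [hL a ha]

lemma neg_two_mul_re_pos {a : ℂ} (ha : a.re < 0) : 0 < -(2 * a.re : ℂ) := by
  rw [← Complex.ofReal_ofNat, ← Complex.ofReal_mul, ← Complex.ofReal_neg, Complex.zero_lt_real]
  linarith

section Matrix

variable {ι : Type*} [Fintype ι] [DecidableEq ι]

omit [DecidableEq ι] in
lemma star_mulVec_dotProduct {α : Type*} [CommSemiring α] [StarRing α] (M : Matrix ι ι α)
    (u v : ι → α) : star (M *ᵥ u) ⬝ᵥ v = star u ⬝ᵥ (Mᴴ *ᵥ v) := by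
  rw [star_mulVec, ← dotProduct_mulVec]

omit [DecidableEq ι] in
lemma star_smul_mulVec_dotProduct {ρ : ℂ} (hρ : ‖ρ‖ = 1) (B : Matrix ι ι ℂ) (x : ι → ℂ) :
    star ((ρ • B) *ᵥ x) ⬝ᵥ ((ρ • B) *ᵥ x) = star (B *ᵥ x) ⬝ᵥ (B *ᵥ x) := by
  rw [smul_mulVec, star_smul, smul_dotProduct, dotProduct_smul, smul_smul, Complex.star_def,
    Complex.conj_mul', hρ]
  simp

lemma aeval_X_sub_C_eq (M : Matrix ι ι ℂ) (a : ℂ) : aeval M (X - C a) = M - a • 1 := by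
  simp [Algebra.algebraMap_eq_smul_one]

lemma aeval_X_add_C_eq (M : Matrix ι ι ℂ) (a : ℂ) : aeval M (X + C a) = M + a • 1 := by
  simp [Algebra.algebraMap_eq_smul_one]

lemma dotProduct_sub_smul_sub_dotProduct_add_smul (M : Matrix ι ι ℂ) (a : ℂ) (y : ι → ℂ) :
    star ((M - a • 1) *ᵥ y) ⬝ᵥ ((M - a • 1) *ᵥ y)
        - star ((M + conj a • 1) *ᵥ y) ⬝ᵥ ((M + conj a • 1) *ᵥ y)
      = -(2 * a.re : ℂ) * (star y ⬝ᵥ ((M + Mᴴ) *ᵥ y)) := by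
  rw [Complex.re_eq_add_conj]
  simp only [sub_mulVec, add_mulVec, smul_mulVec, one_mulVec, star_sub, star_add, star_smul,
    sub_dotProduct, add_dotProduct, dotProduct_sub, dotProduct_add, smul_dotProduct,
    dotProduct_smul, smul_eq_mul, star_mulVec_dotProduct, Complex.star_def, Complex.conj_conj]
  ring

/-- `‖P(M) w‖² - ‖Q(M) w‖²`, where `P` and `Q` are the denominator and numerator of the
Blaschke product with zeros `-conj a`, `a ∈ L`. -/
noncomputable def blaschkeDefect (M : Matrix ι ι ℂ) (L : List ℂ) (w : ι → ℂ) : ℂ :=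
  star (aeval M (blaschkeDen L) *ᵥ w) ⬝ᵥ (aeval M (blaschkeDen L) *ᵥ w)
    - star (aeval M (blaschkeNum L) *ᵥ w) ⬝ᵥ (aeval M (blaschkeNum L) *ᵥ w)

lemma blaschkeDefect_cons (M : Matrix ι ι ℂ) (a : ℂ) (L : List ℂ) (w : ι → ℂ) :
    blaschkeDefect M (a :: L) w
      = -(2 * a.re : ℂ) * (star (aeval M (blaschkeDen L) *ᵥ w)
            ⬝ᵥ ((M + Mᴴ) *ᵥ (aeval M (blaschkeDen L) *ᵥ w)))
        + blaschkeDefect M L ((M + conj a • 1) *ᵥ w) := by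
  have hden : aeval M (blaschkeDen (a :: L)) *ᵥ w
      = (M - a • 1) *ᵥ (aeval M (blaschkeDen L) *ᵥ w) := by
    simp only [blaschkeDen, List.map_cons, List.prod_cons, map_mul, aeval_X_sub_C_eq,
      mulVec_mulVec]
  have hnum : aeval M (blaschkeNum (a :: L)) *ᵥ w
      = aeval M (blaschkeNum L) *ᵥ ((M + conj a • 1) *ᵥ w) := by
    simp only [blaschkeNum, List.map_cons, List.prod_cons, mul_comm (X + C _), map_mul,
      aeval_X_add_C_eq, mulVec_mulVec]
  have hswap : (M + conj a • 1) *ᵥ (aeval M (blaschkeDen L) *ᵥ w)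
      = aeval M (blaschkeDen L) *ᵥ ((M + conj a • 1) *ᵥ w) := by
    simp only [← aeval_X_add_C_eq, mulVec_mulVec, ← map_mul, mul_comm]
  rw [← dotProduct_sub_smul_sub_dotProduct_add_smul, blaschkeDefect, blaschkeDefect, hden, hnum,
    hswap]
  ring

lemma blaschkeDefect_nonneg {M : Matrix ι ι ℂ} (hM : (M + Mᴴ).PosSemidef) {L : List ℂ}
    (hL : ∀ a ∈ L, a.re < 0) (w : ι → ℂ) : 0 ≤ blaschkeDefect M L w := by
  induction L generalizing w with
  | nil => simp [blaschkeDefect, blaschkeNum, blaschkeDen]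
  | cons a L ih =>
    rw [blaschkeDefect_cons]
    exact add_nonneg
      (mul_nonneg (neg_two_mul_re_pos (hL a List.mem_cons_self)).le
        (hM.dotProduct_mulVec_nonneg _))
      (ih (fun b hb => hL b (List.mem_cons_of_mem a hb)) _)

/-- Both terms of `blaschkeDefect_cons` vanish: the first gives `(M + Mᴴ) P_L(M) w = 0`, the
second (by induction, applied to `(M + conj a) w`) kills `(M + Mᴴ) q(M) (M + conj a) w`
for `deg q < |L|`; dividing by `X + conj a` then handles every `p` with `deg p ≤ |L|`. -/
lemma blaschkeDefect_eq_zero {M : Matrix ι ι ℂ} (hM : (M + Mᴴ).PosSemidef) {L : List ℂ}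
    (hL : ∀ a ∈ L, a.re < 0) {w : ι → ℂ} (h0 : blaschkeDefect M L w = 0)
    {p : ℂ[X]} (hp : p.degree < L.length) : (M + Mᴴ) *ᵥ (aeval M p *ᵥ w) = 0 := by
  induction L generalizing w p with
  | nil => simp_all
  | cons a L ih =>
    have ha := neg_two_mul_re_pos (hL a List.mem_cons_self)
    have hL' : ∀ b ∈ L, b.re < 0 := fun b hb => hL b (List.mem_cons_of_mem a hb)
    rw [blaschkeDefect_cons] at h0
    obtain ⟨hy, hrest⟩ := (add_eq_zero_iff_of_nonneg
      (mul_nonneg ha.le (hM.dotProduct_mulVec_nonneg _)) (blaschkeDefect_nonneg hM hL' _)).mp h0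
    have hCy := (hM.dotProduct_mulVec_zero_iff _).mp ((mul_eq_zero.mp hy).resolve_left ha.ne')
    let f : ℂ[X] →ₗ[ℂ] ι → ℂ :=
      (M + Mᴴ).mulVecLin ∘ₗ (mulVecBilin ℂ ℂ).flip w ∘ₗ (aeval M).toLinearMap
    refine map_eq_zero_of_degree_le_of_eval_ne_zero f (-conj a) L.length (fun q hq => ?_)
      (degree_blaschkeDen L).le (eval_blaschkeDen_ne_zero hL' ?_) hCy
      (Order.le_of_lt_succ (by exact_mod_cast hp))
    · change (M + Mᴴ) *ᵥ (aeval M (q * (X - C (-conj a))) *ᵥ w) = 0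
      rw [map_neg, sub_neg_eq_add, map_mul, aeval_X_add_C_eq, ← mulVec_mulVec]
      exact ih hL' hrest hq
    · simpa using (hL a List.mem_cons_self).le

lemma exists_degree_lt_card_aeval_eq {R : Type*} [CommRing R] [Nontrivial R] (M : Matrix ι ι R)
    (p : R[X]) : ∃ q : R[X], q.degree < Fintype.card ι ∧ aeval M q = aeval M p :=
  ⟨p %ₘ M.charpoly, M.charpoly_degree_eq_dim ▸ degree_modByMonic_lt _ M.charpoly_monic,
    aeval_modByMonic_eq_self_of_root M.aeval_self_charpoly⟩

omit [DecidableEq ι] in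
lemma re_eq_zero_of_mulVec_eq_smul {M : Matrix ι ι ℂ} {μ : ℂ} {v : ι → ℂ} (hv : v ≠ 0)
    (hMv : M *ᵥ v = μ • v) (hCv : (M + Mᴴ) *ᵥ v = 0) : μ.re = 0 := by
  have hq : star v ⬝ᵥ ((M + Mᴴ) *ᵥ v) = (2 * μ.re : ℂ) * (star v ⬝ᵥ v) := by
    rw [add_mulVec, dotProduct_add, ← star_mulVec_dotProduct, hMv, Complex.re_eq_add_conj]
    simp only [star_smul, smul_dotProduct, dotProduct_smul, smul_eq_mul, Complex.star_def]
    ring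
  rw [hCv, dotProduct_zero, eq_comm, mul_eq_zero] at hq
  simpa [dotProduct_star_self_eq_zero, hv] using hq

/-- The subspace `⋂ₚ ker ((M + Mᴴ) p(M))` is `M`-invariant, so it would contain an eigenvector
of `M` annihilated by `M + Mᴴ`. -/
lemma eq_zero_of_forall_mulVec_aeval_eq_zero {M : Matrix ι ι ℂ}
    (hM : ∀ z ∈ spectrum ℂ M, z.re ≠ 0) {w : ι → ℂ}
    (hw : ∀ p : ℂ[X], (M + Mᴴ) *ᵥ (aeval M p *ᵥ w) = 0) : w = 0 := by
  by_contra hw0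
  let U : Submodule ℂ (ι → ℂ) := ⨅ p : ℂ[X], LinearMap.ker ((M + Mᴴ) * aeval M p).mulVecLin
  have hU : ∀ {v}, v ∈ U ↔ ∀ p : ℂ[X], (M + Mᴴ) *ᵥ (aeval M p *ᵥ v) = 0 := by
    simp only [U, Submodule.mem_iInf, LinearMap.mem_ker, mulVecLin_apply, mulVec_mulVec,
      implies_true]
  have hUM : ∀ v ∈ U, M.mulVecLin v ∈ U := fun v hv => hU.mpr fun p => by
    have := hU.mp hv (p * X)
    rwa [map_mul, aeval_X, ← mulVec_mulVec] at this
  have : Nontrivial U := ⟨⟨w, hU.mpr hw⟩, 0, by simpa using hw0⟩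
  obtain ⟨μ, hμ⟩ := Module.End.exists_eigenvalue (M.mulVecLin.restrict hUM)
  obtain ⟨⟨v, hvU⟩, hv⟩ := hμ.exists_hasEigenvector
  have hMv : M *ᵥ v = μ • v := by simpa using congrArg Subtype.val hv.apply_eq_smul
  have hv0 : v ≠ 0 := by simpa using hv.2
  have hspec : μ ∈ spectrum ℂ M := by
    rw [← spectrum_toLin', ← Module.End.hasEigenvalue_iff_mem_spectrum]
    exact Module.End.hasEigenvalue_of_hasEigenvector
      ⟨Module.End.mem_eigenspace_iff.mpr (by simpa using hMv), hv0⟩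
  exact hM μ hspec (re_eq_zero_of_mulVec_eq_smul hv0 hMv (by simpa using hU.mp hvU 1))

noncomputable def blaschkeFactor (M : Matrix ι ι ℂ) (a : ℂ) : Matrix ι ι ℂ :=
  (M + conj a • 1) * (M - a • 1)⁻¹

lemma isUnit_aeval_blaschkeDen {M : Matrix ι ι ℂ} {L : List ℂ}
    (hL : ∀ a ∈ L, IsUnit (M - a • 1)) : IsUnit (aeval M (blaschkeDen L)) := by
  rw [blaschkeDen, map_list_prod, List.map_map]
  refine List.prod_isUnit fun P hP => ?_
  obtain ⟨a, ha, rfl⟩ := List.mem_map.mp hP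
  simpa only [Function.comp_apply, aeval_X_sub_C_eq] using hL a ha

lemma blaschkeFactor_prod_mul_aeval_blaschkeDen {M : Matrix ι ι ℂ} {L : List ℂ}
    (hL : ∀ a ∈ L, IsUnit (M - a • 1)) :
    (L.map (blaschkeFactor M)).prod * aeval M (blaschkeDen L) = aeval M (blaschkeNum L) := by
  induction L with
  | nil => simp [blaschkeDen, blaschkeNum]
  | cons a L ih =>
    have ha : IsUnit (M - a • 1).det := (isUnit_iff_isUnit_det _).mp (hL a List.mem_cons_self)
    have hcomm : aeval M (blaschkeNum L) * (M - a • 1)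
        = (M - a • 1) * aeval M (blaschkeNum L) := by
      rw [← aeval_X_sub_C_eq, ← map_mul, ← map_mul, mul_comm]
    calc (blaschkeFactor M a * (L.map (blaschkeFactor M)).prod)
          * aeval M ((X - C a) * blaschkeDen L)
        = blaschkeFactor M a * ((L.map (blaschkeFactor M)).prod * aeval M (blaschkeDen L))
            * (M - a • 1) := by
          rw [mul_comm (X - C a), map_mul, aeval_X_sub_C_eq]; noncomm_ring
      _ = (M + conj a • 1) * aeval M (blaschkeNum L) := by
          rw [ih fun b hb => hL b (List.mem_cons_of_mem a hb), mul_assoc, hcomm, blaschkeFactor,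
            mul_assoc, ← mul_assoc _ (M - a • 1), nonsing_inv_mul _ ha, one_mul]
      _ = aeval M ((X + C (conj a)) * blaschkeNum L) := by rw [map_mul, aeval_X_add_C_eq]

lemma eq_zero_of_dotProduct_blaschkeFactor_prod_mulVec {M : Matrix ι ι ℂ}
    (hM : (M + Mᴴ).PosSemidef) (hspec : ∀ z ∈ spectrum ℂ M, 0 < z.re) {L : List ℂ}
    (hL : ∀ a ∈ L, a.re < 0) (hcard : Fintype.card ι ≤ L.length) {x : ι → ℂ}
    (hx : star ((L.map (blaschkeFactor M)).prod *ᵥ x) ⬝ᵥ ((L.map (blaschkeFactor M)).prod *ᵥ x)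
      = star x ⬝ᵥ x) : x = 0 := by
  have hunit : ∀ a ∈ L, IsUnit (M - a • 1) := fun a ha => by
    have hnot : a ∉ spectrum ℂ M := fun h => (hspec a h).not_gt (hL a ha)
    simpa [Algebra.algebraMap_eq_smul_one] using (spectrum.notMem_iff.mp hnot).neg
  obtain ⟨P, hP⟩ := isUnit_aeval_blaschkeDen hunit
  set w := (P⁻¹ : (Matrix ι ι ℂ)ˣ).val *ᵥ x
  have hxw : x = aeval M (blaschkeDen L) *ᵥ w := by
    rw [← hP, mulVec_mulVec, Units.mul_inv, one_mulVec]
  have hdefect : blaschkeDefect M L w = 0 := by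
    rw [blaschkeDefect, ← blaschkeFactor_prod_mul_aeval_blaschkeDen hunit, ← mulVec_mulVec, ← hxw,
      hx, sub_self]
  have hw : w = 0 := eq_zero_of_forall_mulVec_aeval_eq_zero (fun z hz => (hspec z hz).ne')
    fun p => by
      obtain ⟨q, hq, hqp⟩ := exists_degree_lt_card_aeval_eq M p
      rw [← hqp]
      exact blaschkeDefect_eq_zero hM hL hdefect (hq.trans_le (by exact_mod_cast hcard))
  rw [hxw, hw, mulVec_zero]

lemma isUnit_one_sub_conjTranspose_mul_self {B : Matrix ι ι ℂ}
    (hB : ∀ x, star (B *ᵥ x) ⬝ᵥ (B *ᵥ x) = star x ⬝ᵥ x → x = 0) : IsUnit (1 - Bᴴ * B) := by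
  refine mulVec_injective_iff_isUnit.mp ((injective_iff_map_eq_zero (1 - Bᴴ * B).mulVecLin).mpr
    fun x hx => hB x ?_)
  rw [mulVecLin_apply, sub_mulVec, one_mulVec, sub_eq_zero, ← mulVec_mulVec] at hx
  rw [star_mulVec_dotProduct, ← hx]

end Matrix

lemma blaschkeEvalM_eq_smul_prod {n d : ℕ} (ρ : ℂ) (α : Fin d → ℂ) (M : Matrix (Fin n) (Fin n) ℂ) :
    blaschkeEvalM ρ α M = ρ • ((List.ofFn α).map (blaschkeFactor M)).prod := by
  rw [blaschkeEvalM, List.map_ofFn]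
  rfl

theorem stmt_7 {n d : ℕ}
    (A : Matrix (Fin n) (Fin n) ℂ)
    (hstab : ∀ z ∈ spectrum ℂ A, z.re < 0)
    (hdiss : (-(A + Aᴴ)).PosSemidef)
    (ρ : ℂ) (hρ : ‖ρ‖ = 1)
    (α : Fin d → ℂ) (hα : ∀ k, (α k).re < 0)
    (hdeg : n ≤ d) :
    IsUnit ((1 : Matrix (Fin n) (Fin n) ℂ)
        - (blaschkeEvalM ρ α (-A))ᴴ * blaschkeEvalM ρ α (-A)) ∧
      ¬ Module.End.HasEigenvalue
        (Matrix.toLin' ((blaschkeEvalM ρ α (-A))ᴴ * blaschkeEvalM ρ α (-A))) 1 ∧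
      ((1 : Matrix (Fin n) (Fin n) ℂ)
        - (blaschkeEvalM ρ α (-A))ᴴ * blaschkeEvalM ρ α (-A)).rank = n := by
  have hM : (-A + (-A)ᴴ).PosSemidef := by rwa [conjTranspose_neg, ← neg_add]
  have hspec : ∀ z ∈ spectrum ℂ (-A), 0 < z.re := fun z hz => by
    rw [← spectrum.neg_eq, Set.mem_neg] at hz
    simpa using hstab _ hz
  have hL : ∀ a ∈ List.ofFn α, a.re < 0 := by
    simpa only [List.forall_mem_ofFn_iff] using hα
  have hU := isUnit_one_sub_conjTranspose_mul_self (B := blaschkeEvalM ρ α (-A)) fun x hx => by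
    rw [blaschkeEvalM_eq_smul_prod, star_smul_mulVec_dotProduct hρ] at hx
    exact eq_zero_of_dotProduct_blaschkeFactor_prod_mulVec hM hspec hL
      (by simpa using hdeg) hx
  refine ⟨hU, ?_, by rw [rank_of_isUnit _ hU, Fintype.card_fin]⟩
  rw [Module.End.hasEigenvalue_iff_mem_spectrum, spectrum_toLin', spectrum.mem_iff, map_one,
    not_not]
  exact hU
end

section
/- Let A be an n×n complex matrix such that every eigenvalue of A has negative real part and A + A* is negative semidefinite, and let b be a finite Blaschke product. Then the matrix b(−A) is a contraction, i.e., I − b(−A)*b(−A) is positive semidefinite. -/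
open Matrix
open scoped ComplexOrder

/-!
Each factor of `b(M)`, `M = -A`, is a Cayley transform `(M + c̄)(M - c)⁻¹` with `Re c < 0` of the
accretive matrix `M` (`M + Mᴴ ≥ 0`). Writing `N = M - c` and `P = M + c̄`, one has
`NᴴN - PᴴP = -2 Re c · (M + Mᴴ) ≥ 0`, so `1 - (PN⁻¹)ᴴ(PN⁻¹) = N⁻ᴴ(NᴴN - PᴴP)N⁻¹ ≥ 0`.
Contractions are closed under products and unimodular scalars, which gives the theorem.
Accretivity also makes `N` invertible: `Mv = cv` forces `vᴴ(M + Mᴴ)v = 2 Re c ‖v‖² ≤ 0`.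
-/

namespace Matrix

variable {n 𝕜 : Type*} [Fintype n] [RCLike 𝕜]

theorem eq_zero_of_mulVec_eq_smul {M : Matrix n n ℂ} (hM : (M + Mᴴ).PosSemidef) {c : ℂ}
    (hc : c.re < 0) {v : n → ℂ} (hv : M *ᵥ v = c • v) : v = 0 := by
  have hquad : star v ⬝ᵥ (M + Mᴴ) *ᵥ v = ((2 * c.re : ℝ) : ℂ) * (star v ⬝ᵥ v) := by
    rw [add_mulVec, dotProduct_add, dotProduct_mulVec (star v) Mᴴ, vecMul_conjTranspose,
      star_star, hv, star_smul, dotProduct_smul, smul_dotProduct, smul_eq_mul, smul_eq_mul,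
      ← add_mul, Complex.star_def, Complex.add_conj]
  by_contra hv0
  have hpos : 0 < star v ⬝ᵥ v := dotProduct_star_self_pos_iff.mpr hv0
  have hneg : ((2 * c.re : ℝ) : ℂ) < 0 := by exact_mod_cast (by linarith : 2 * c.re < 0)
  have := hM.dotProduct_mulVec_nonneg v
  rw [hquad] at this
  exact (mul_neg_of_neg_of_pos hneg hpos).not_ge this

variable [DecidableEq n]

def IsContraction (C : Matrix n n 𝕜) : Prop :=
  (1 - Cᴴ * C).PosSemidef

namespace IsContraction

theorem one : IsContraction (1 : Matrix n n 𝕜) := by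
  simp [IsContraction, PosSemidef.zero]

theorem mul {B C : Matrix n n 𝕜} (hB : B.IsContraction) (hC : C.IsContraction) :
    (B * C).IsContraction := by
  have h : 1 - (B * C)ᴴ * (B * C) = (1 - Cᴴ * C) + Cᴴ * (1 - Bᴴ * B) * C := by
    simp only [conjTranspose_mul, Matrix.mul_sub, Matrix.sub_mul, Matrix.mul_one, Matrix.mul_assoc]
    abel
  rw [IsContraction, h]
  exact hC.add (hB.conjTranspose_mul_mul_same C)

theorem list_prod {L : List (Matrix n n 𝕜)} (h : ∀ B ∈ L, B.IsContraction) :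
    L.prod.IsContraction := by
  induction L with
  | nil => exact one
  | cons B L ih =>
    rw [List.prod_cons]
    exact (h B List.mem_cons_self).mul (ih fun C hC => h C (List.mem_cons_of_mem B hC))

theorem smul {C : Matrix n n 𝕜} (hC : C.IsContraction) {ρ : 𝕜} (hρ : ‖ρ‖ = 1) :
    (ρ • C).IsContraction := by
  have hρρ : star ρ * ρ = 1 := by
    rw [RCLike.star_def, RCLike.conj_mul, hρ]; norm_num
  rwa [IsContraction, conjTranspose_smul, smul_mul_smul_comm, hρρ, one_smul]

end IsContraction

theorem isUnit_sub_smul_one {M : Matrix n n ℂ} (hM : (M + Mᴴ).PosSemidef) {c : ℂ}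
    (hc : c.re < 0) : IsUnit (M - c • 1) := by
  refine mulVec_injective_iff_isUnit.mp fun v w hvw => ?_
  have h : M *ᵥ (v - w) = c • (v - w) := by
    rw [sub_mulVec, sub_mulVec, smul_mulVec, smul_mulVec, one_mulVec, one_mulVec] at hvw
    rw [mulVec_sub, smul_sub]
    exact sub_eq_sub_iff_sub_eq_sub.mp hvw
  exact sub_eq_zero.mp (eq_zero_of_mulVec_eq_smul hM hc h)

theorem gram_sub_smul_one_sub_gram_add_star_smul_one (M : Matrix n n ℂ) (c : ℂ) :
    (M - c • 1)ᴴ * (M - c • 1) - (M + star c • 1)ᴴ * (M + star c • 1)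
      = (-2 * c.re : ℝ) • (M + Mᴴ) := by
  have hre : ((-2 * c.re : ℝ) : ℂ) = -(c + star c) := by
    rw [Complex.star_def, Complex.add_conj]; push_cast; ring
  rw [← Complex.coe_smul, hre]
  simp only [conjTranspose_sub, conjTranspose_add, conjTranspose_smul, conjTranspose_one,
    star_star, Matrix.sub_mul, Matrix.mul_sub, Matrix.add_mul, Matrix.mul_add,
    Matrix.smul_mul, Matrix.mul_smul, Matrix.one_mul, Matrix.mul_one]
  module

theorem isContraction_cayley {M : Matrix n n ℂ} (hM : (M + Mᴴ).PosSemidef) {c : ℂ}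
    (hc : c.re < 0) : ((M + star c • 1) * (M - c • 1)⁻¹).IsContraction := by
  set N := M - c • (1 : Matrix n n ℂ)
  set P := M + star c • (1 : Matrix n n ℂ)
  have hN : IsUnit N.det := (isUnit_iff_isUnit_det N).mp (isUnit_sub_smul_one hM hc)
  have hNN : (N⁻¹)ᴴ * Nᴴ = 1 := by
    rw [← conjTranspose_mul, mul_nonsing_inv N hN, conjTranspose_one]
  have h : 1 - (P * N⁻¹)ᴴ * (P * N⁻¹) = (N⁻¹)ᴴ * (Nᴴ * N - Pᴴ * P) * N⁻¹ := by
    rw [conjTranspose_mul, Matrix.mul_sub, Matrix.sub_mul, ← hNN]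
    simp only [Matrix.mul_assoc, mul_nonsing_inv N hN, Matrix.mul_one]
  rw [IsContraction, h, gram_sub_smul_one_sub_gram_add_star_smul_one]
  exact (hM.smul (by linarith : (0 : ℝ) ≤ -2 * c.re)).conjTranspose_mul_mul_same _

end Matrix

theorem stmt_9_general {n d : ℕ}
    (A : Matrix (Fin n) (Fin n) ℂ)
    (hdiss : (-(A + Aᴴ)).PosSemidef)
    (ρ : ℂ) (hρ : ‖ρ‖ = 1)
    (α : Fin d → ℂ) (hα : ∀ k, (α k).re < 0) :
    ((1 : Matrix (Fin n) (Fin n) ℂ)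
        - (blaschkeEvalM ρ α (-A))ᴴ * blaschkeEvalM ρ α (-A)).PosSemidef := by
  have hM : (-A + (-A)ᴴ).PosSemidef := by rwa [conjTranspose_neg, ← neg_add]
  refine IsContraction.smul (IsContraction.list_prod fun B hB => ?_) hρ
  obtain ⟨k, rfl⟩ := List.mem_ofFn.mp hB
  exact isContraction_cayley hM (hα k)

theorem stmt_9 {n d : ℕ}
    (A : Matrix (Fin n) (Fin n) ℂ)
    (hstab : ∀ z ∈ spectrum ℂ A, z.re < 0)
    (hdiss : (-(A + Aᴴ)).PosSemidef)
    (ρ : ℂ) (hρ : ‖ρ‖ = 1)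
    (α : Fin d → ℂ) (hα : ∀ k, (α k).re < 0) :
    ((1 : Matrix (Fin n) (Fin n) ℂ)
        - (blaschkeEvalM ρ α (-A))ᴴ * blaschkeEvalM ρ α (-A)).PosSemidef :=
  stmt_9_general A hdiss ρ hρ α hα
end

section
/- Let A be an n×n complex matrix such that every eigenvalue of A has negative real part, A + A* is negative semidefinite, and rank(A + A*) = 1. Let q be a stable complex polynomial of degree strictly less than n. Then the matrix q(−A)*q(−A) − q^♯(−A)*q^♯(−A) is positive semidefinite but singular (not invertible). -/
/-!
Write `D(p) = p(B)ᴴ p(B) - p♯(B)ᴴ p♯(B)` with `B = -A`. Since polynomials in `B` commute,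
`D(f p) = p(B)ᴴ D(f) p(B) + f♯(B)ᴴ D(p) f♯(B)`, while `D(c) = 0` for constants and
`D(X - r) = -2 Re r • (B + Bᴴ)`. Factoring `q` into linear factors over `ℂ`, `D(q)` is therefore a
sum of congruences of nonnegative multiples of `B + Bᴴ = -(A + Aᴴ)`, one per root of `q`: it is
positive semidefinite, and of rank at most `deg q · rank (A + Aᴴ) = deg q < n`.
-/

open Matrix Polynomial
open scoped ComplexOrder

noncomputable def polySharp (p : Polynomial ℂ) : Polynomial ℂ :=
  (p.map (starRingEnd ℂ)).comp (-Polynomial.X)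

namespace Matrix

variable {m n K : Type*} [Fintype n] [Field K]

theorem rank_add_le (M N : Matrix m n K) : (M + N).rank ≤ M.rank + N.rank := by
  rw [rank, rank, rank, mulVecLin_add]
  exact (Submodule.finrank_mono (LinearMap.range_add_le _ _)).trans
    (Submodule.finrank_add_le_finrank_add_finrank _ _)

theorem rank_smul_le (c : K) (M : Matrix m n K) : (c • M).rank ≤ M.rank := by
  rw [rank, rank]
  refine Submodule.finrank_mono ?_
  convert LinearMap.range_smul_le_range M.mulVecLin c using 2
  ext
  simp

theorem rank_neg (M : Matrix m n K) : (-M).rank = M.rank := by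
  rw [← neg_one_smul K M]
  exact rank_smul_of_mem_nonZeroDivisors M (mem_nonZeroDivisors_of_ne_zero (by norm_num))

theorem rank_conjTranspose_mul_mul_le [StarRing K] [Fintype m] (P : Matrix n m K)
    (M : Matrix n n K) : (Pᴴ * M * P).rank ≤ M.rank :=
  (rank_mul_le_left _ _).trans (rank_mul_le_right _ _)

end Matrix

theorem Commute.star_mul_star_mul_mul {R : Type*} [Semiring R] [StarMul R] {a b : R}
    (h : Commute a b) : star a * (star b * b) * a = star b * (star a * a) * b := by
  calc star a * (star b * b) * a = (star a * star b) * (b * a) := by simp only [mul_assoc]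
    _ = (star b * star a) * (a * b) := by rw [h.star_star.eq, h.eq]
    _ = star b * (star a * a) * b := by simp only [mul_assoc]

theorem polySharp_mul (p q : ℂ[X]) : polySharp (p * q) = polySharp p * polySharp q := by
  simp [polySharp, Polynomial.map_mul, mul_comp]

theorem polySharp_C (c : ℂ) : polySharp (C c) = C (star c) := by
  simp [polySharp]

theorem polySharp_X_sub_C (r : ℂ) : polySharp (X - C r) = -X - C (star r) := by
  simp [polySharp, sub_comp]

section SharpDefect

variable {m : Type*} [Fintype m] [DecidableEq m] (B : Matrix m m ℂ)

noncomputable def sharpDefect (p : ℂ[X]) : Matrix m m ℂ :=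
  (aeval B p)ᴴ * aeval B p - (aeval B (polySharp p))ᴴ * aeval B (polySharp p)

theorem sharpDefect_C (c : ℂ) : sharpDefect B (C c) = 0 := by
  simp [sharpDefect, polySharp_C, Algebra.algebraMap_eq_smul_one, smul_smul, mul_comm]

theorem sharpDefect_X_sub_C (r : ℂ) :
    sharpDefect B (X - C r) = ((-2 * r.re : ℝ) : ℂ) • (B + Bᴴ) := by
  have hre : ((-2 * r.re : ℝ) : ℂ) = -(r + star r) := by
    rw [Complex.star_def, Complex.add_conj]; push_cast; ring
  rw [hre]
  simp only [sharpDefect, polySharp_X_sub_C, map_sub, map_neg, aeval_X, aeval_C,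
    Algebra.algebraMap_eq_smul_one, conjTranspose_sub, conjTranspose_neg, conjTranspose_smul,
    conjTranspose_one, star_star, sub_mul, mul_sub, neg_mul, mul_neg, smul_mul_assoc,
    mul_smul_comm, one_mul, mul_one]
  module

theorem sharpDefect_mul (f p : ℂ[X]) :
    sharpDefect B (f * p) =
      (aeval B p)ᴴ * sharpDefect B f * aeval B p +
        (aeval B (polySharp f))ᴴ * sharpDefect B p * aeval B (polySharp f) := by
  have hP := ((Commute.all (polySharp f) p).map (aeval B)).star_mul_star_mul_mul
  have hQ := ((Commute.all (polySharp f) (polySharp p)).map (aeval B)).star_mul_star_mul_mul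
  simp only [star_eq_conjTranspose] at hP hQ
  simp only [sharpDefect, polySharp_mul, map_mul, conjTranspose_mul, mul_sub, sub_mul,
    mul_assoc] at hP hQ ⊢
  rw [hP, hQ]
  abel

theorem sharpDefect_one : sharpDefect B 1 = 0 := by
  simpa using sharpDefect_C B 1

theorem posSemidef_sharpDefect_mul {f p : ℂ[X]} (hf : (sharpDefect B f).PosSemidef)
    (hp : (sharpDefect B p).PosSemidef) : (sharpDefect B (f * p)).PosSemidef := by
  rw [sharpDefect_mul]
  exact (hf.conjTranspose_mul_mul_same _).add (hp.conjTranspose_mul_mul_same _)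

theorem rank_sharpDefect_mul_le (f p : ℂ[X]) :
    (sharpDefect B (f * p)).rank ≤ (sharpDefect B f).rank + (sharpDefect B p).rank := by
  rw [sharpDefect_mul]
  exact (rank_add_le _ _).trans
    (add_le_add (rank_conjTranspose_mul_mul_le _ _) (rank_conjTranspose_mul_mul_le _ _))

theorem posSemidef_sharpDefect (hB : (B + Bᴴ).PosSemidef) {p : ℂ[X]}
    (hp : ∀ z ∈ p.roots, z.re ≤ 0) : (sharpDefect B p).PosSemidef := by
  rw [← C_leadingCoeff_mul_prod_multiset_X_sub_C
    (splits_iff_card_roots.mp (IsAlgClosed.splits p))]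
  have hC : (sharpDefect B (C p.leadingCoeff)).PosSemidef := by
    rw [sharpDefect_C]; exact .zero
  have hone : (sharpDefect B 1).PosSemidef := by
    rw [sharpDefect_one]; exact .zero
  refine posSemidef_sharpDefect_mul B hC
    (Multiset.prod_induction (fun f => (sharpDefect B f).PosSemidef) _
      (fun _ _ => posSemidef_sharpDefect_mul B) hone ?_)
  simp only [Multiset.mem_map]
  rintro _ ⟨r, hr, rfl⟩
  rw [sharpDefect_X_sub_C]
  exact hB.smul (Complex.zero_le_real.mpr (by linarith [hp r hr]))

theorem rank_sharpDefect_prod_X_sub_C_le (s : Multiset ℂ) :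
    (sharpDefect B (s.map (X - C ·)).prod).rank ≤ Multiset.card s * (B + Bᴴ).rank := by
  induction s using Multiset.induction_on with
  | empty => simp [sharpDefect_one]
  | cons r s ih =>
    rw [Multiset.map_cons, Multiset.prod_cons, Multiset.card_cons, add_mul, one_mul, add_comm]
    refine (rank_sharpDefect_mul_le B _ _).trans (add_le_add ?_ ih)
    rw [sharpDefect_X_sub_C]
    exact rank_smul_le _ _

theorem rank_sharpDefect_le (p : ℂ[X]) :
    (sharpDefect B p).rank ≤ p.natDegree * (B + Bᴴ).rank := by
  have hroots := splits_iff_card_roots.mp (IsAlgClosed.splits p)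
  calc (sharpDefect B p).rank
      = (sharpDefect B (C p.leadingCoeff * (p.roots.map (X - C ·)).prod)).rank := by
        rw [C_leadingCoeff_mul_prod_multiset_X_sub_C hroots]
    _ ≤ (sharpDefect B (p.roots.map (X - C ·)).prod).rank := by
        refine (rank_sharpDefect_mul_le B _ _).trans ?_
        rw [sharpDefect_C, rank_zero, zero_add]
    _ ≤ p.natDegree * (B + Bᴴ).rank := by
        rw [← hroots]
        exact rank_sharpDefect_prod_X_sub_C_le B _

end SharpDefect

theorem stmt_11_general {n : ℕ}
    (A : Matrix (Fin n) (Fin n) ℂ)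
    (hdiss : (-(A + Aᴴ)).PosSemidef)
    (hrank : (A + Aᴴ).rank = 1)
    (q : Polynomial ℂ)
    (hqstab : ∀ z ∈ q.roots, z.re < 0)
    (hqdeg : q.natDegree < n) :
    ((Polynomial.aeval (-A) q)ᴴ * Polynomial.aeval (-A) q -
        (Polynomial.aeval (-A) (polySharp q))ᴴ *
          Polynomial.aeval (-A) (polySharp q)).PosSemidef ∧
      ¬ IsUnit ((Polynomial.aeval (-A) q)ᴴ * Polynomial.aeval (-A) q -
        (Polynomial.aeval (-A) (polySharp q))ᴴ *
          Polynomial.aeval (-A) (polySharp q)) := by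
  have hsum : -A + (-A)ᴴ = -(A + Aᴴ) := by rw [conjTranspose_neg, neg_add]
  refine ⟨posSemidef_sharpDefect (-A) (hsum ▸ hdiss) fun z hz => (hqstab z hz).le,
    fun hunit => ?_⟩
  have hle := rank_sharpDefect_le (-A) q
  rw [hsum, rank_neg, hrank, mul_one] at hle
  have hfull : (sharpDefect (-A) q).rank = n := by
    simpa using rank_of_isUnit (sharpDefect (-A) q) hunit
  omega

theorem stmt_11 {n : ℕ}
    (A : Matrix (Fin n) (Fin n) ℂ)
    (hstab : ∀ z ∈ spectrum ℂ A, z.re < 0)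
    (hdiss : (-(A + Aᴴ)).PosSemidef)
    (hrank : (A + Aᴴ).rank = 1)
    (q : Polynomial ℂ) (hq : q ≠ 0)
    (hqstab : ∀ z ∈ q.roots, z.re < 0)
    (hqdeg : q.natDegree < n) :
    ((Polynomial.aeval (-A) q)ᴴ * Polynomial.aeval (-A) q -
        (Polynomial.aeval (-A) (polySharp q))ᴴ *
          Polynomial.aeval (-A) (polySharp q)).PosSemidef ∧
      ¬ IsUnit ((Polynomial.aeval (-A) q)ᴴ * Polynomial.aeval (-A) q -
        (Polynomial.aeval (-A) (polySharp q))ᴴ *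
          Polynomial.aeval (-A) (polySharp q)) :=
  stmt_11_general A hdiss hrank q hqstab hqdeg
end

section
/- Let A_d be an n×n complex matrix with I + A_d invertible, B_d an n×m matrix, C_d a p×n matrix, and D_d a p×m matrix, and let A_c, B_c, C_c, D_c be their Cayley transforms. Then for every complex s with s ≠ −1 such that sI − A_c is invertible and I − ζ(s)A_d is invertible, one has D_d + ζ(s)·C_d(I − ζ(s)A_d)^{-1}B_d = D_c + C_c(sI − A_c)^{-1}B_c, where ζ(s) = (1 − s)/(1 + s). -/
open Matrix

theorem stmt_12 {n m p : ℕ}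
    (Ad : Matrix (Fin n) (Fin n) ℂ) (Bd : Matrix (Fin n) (Fin m) ℂ)
    (Cd : Matrix (Fin p) (Fin n) ℂ) (Dd : Matrix (Fin p) (Fin m) ℂ)
    (hAd : IsUnit ((1 : Matrix (Fin n) (Fin n) ℂ) + Ad))
    (Ac : Matrix (Fin n) (Fin n) ℂ) (Bc : Matrix (Fin n) (Fin m) ℂ)
    (Cc : Matrix (Fin p) (Fin n) ℂ) (Dc : Matrix (Fin p) (Fin m) ℂ)
    (hAc : Ac = (Ad - 1) * (1 + Ad)⁻¹)
    (hBc : Bc = (Real.sqrt 2 : ℂ) • ((1 + Ad)⁻¹ * Bd))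
    (hCc : Cc = (Real.sqrt 2 : ℂ) • (Cd * (1 + Ad)⁻¹))
    (hDc : Dc = Dd - Cd * (1 + Ad)⁻¹ * Bd)
    (ζ : ℂ → ℂ) (hζ : ∀ s : ℂ, ζ s = (1 - s) / (1 + s))
    (s : ℂ) (hs : s ≠ -1)
    (h1 : IsUnit (s • (1 : Matrix (Fin n) (Fin n) ℂ) - Ac))
    (h2 : IsUnit ((1 : Matrix (Fin n) (Fin n) ℂ) - ζ s • Ad)) :
    Dd + ζ s • (Cd * ((1 : Matrix (Fin n) (Fin n) ℂ) - ζ s • Ad)⁻¹ * Bd) =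
      Dc + Cc * (s • (1 : Matrix (Fin n) (Fin n) ℂ) - Ac)⁻¹ * Bc := by
  have hs1 : (1 + s) ≠ 0 := fun h => hs (by linear_combination h)
  have hζ1 : ζ s + 1 = 2 / (1 + s) := by rw [hζ]; field_simp; ring
  have hζs : (1 + s) * ζ s = 1 - s := by rw [hζ]; field_simp
  have hdT := (Matrix.isUnit_iff_isUnit_det _).mp hAd
  have hdM := (Matrix.isUnit_iff_isUnit_det _).mp h2
  have hTi : ((1 : Matrix (Fin n) (Fin n) ℂ) + Ad) * (1 + Ad)⁻¹ = 1 :=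
    Matrix.mul_nonsing_inv _ hdT
  have hTi' : ((1 : Matrix (Fin n) (Fin n) ℂ) + Ad)⁻¹ * (1 + Ad) = 1 :=
    Matrix.nonsing_inv_mul _ hdT
  have hMi : ((1 : Matrix (Fin n) (Fin n) ℂ) - ζ s • Ad) * (1 - ζ s • Ad)⁻¹ = 1 :=
    Matrix.mul_nonsing_inv _ hdM
  have hMi' : ((1 : Matrix (Fin n) (Fin n) ℂ) - ζ s • Ad)⁻¹ * (1 - ζ s • Ad) = 1 :=
    Matrix.nonsing_inv_mul _ hdM
  have key : (s • (1 : Matrix (Fin n) (Fin n) ℂ) - Ac) =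
      ((1 + s) • ((1 : Matrix (Fin n) (Fin n) ℂ) - ζ s • Ad)) * (1 + Ad)⁻¹ := by
    have h3 : (s • (1 : Matrix (Fin n) (Fin n) ℂ) - Ac) * (1 + Ad) =
        (1 + s) • ((1 : Matrix (Fin n) (Fin n) ℂ) - ζ s • Ad) := by
      rw [hAc, Matrix.sub_mul, Matrix.mul_assoc, hTi', Matrix.mul_one,
        Matrix.smul_mul, Matrix.one_mul, smul_sub, smul_smul, hζs]
      module
    calc s • (1 : Matrix (Fin n) (Fin n) ℂ) - Ac
        = (s • (1 : Matrix (Fin n) (Fin n) ℂ) - Ac) * ((1 + Ad) * (1 + Ad)⁻¹) := by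
          rw [hTi, Matrix.mul_one]
      _ = ((1 + s) • ((1 : Matrix (Fin n) (Fin n) ℂ) - ζ s • Ad)) * (1 + Ad)⁻¹ := by
          rw [← Matrix.mul_assoc, h3]
  have hinv : (s • (1 : Matrix (Fin n) (Fin n) ℂ) - Ac)⁻¹ =
      (1 + Ad) * ((1 + s)⁻¹ • ((1 : Matrix (Fin n) (Fin n) ℂ) - ζ s • Ad)⁻¹) := by
    apply Matrix.inv_eq_right_inv
    rw [key, Matrix.mul_assoc, ← Matrix.mul_assoc ((1 + Ad)⁻¹), hTi', Matrix.one_mul,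
      Matrix.smul_mul, Matrix.mul_smul, hMi, smul_smul, mul_inv_cancel₀ hs1, one_smul]
  have key2 : ζ s • ((1 : Matrix (Fin n) (Fin n) ℂ) + Ad) + (1 - ζ s • Ad) =
      (2 / (1 + s)) • (1 : Matrix (Fin n) (Fin n) ℂ) := by
    rw [← hζ1]
    module
  have key3 : ζ s • ((1 : Matrix (Fin n) (Fin n) ℂ) - ζ s • Ad)⁻¹ + (1 + Ad)⁻¹ =
      (2 / (1 + s)) • (((1 : Matrix (Fin n) (Fin n) ℂ) - ζ s • Ad)⁻¹ * (1 + Ad)⁻¹) := by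
    calc ζ s • ((1 : Matrix (Fin n) (Fin n) ℂ) - ζ s • Ad)⁻¹ + (1 + Ad)⁻¹
        = ((1 : Matrix (Fin n) (Fin n) ℂ) - ζ s • Ad)⁻¹ *
            (ζ s • ((1 : Matrix (Fin n) (Fin n) ℂ) + Ad) + (1 - ζ s • Ad)) * (1 + Ad)⁻¹ := by
          rw [Matrix.mul_add, Matrix.add_mul, hMi', Matrix.one_mul, Matrix.mul_smul,
            Matrix.smul_mul, Matrix.mul_assoc ((1 - ζ s • Ad)⁻¹) (1 + Ad) ((1 + Ad)⁻¹),
            hTi, Matrix.mul_one]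
      _ = (2 / (1 + s)) • (((1 : Matrix (Fin n) (Fin n) ℂ) - ζ s • Ad)⁻¹ * (1 + Ad)⁻¹) := by
          rw [key2, Matrix.mul_smul, Matrix.mul_one, Matrix.smul_mul]
  have hk : ζ s • (Cd * (((1 : Matrix (Fin n) (Fin n) ℂ) - ζ s • Ad)⁻¹ * Bd))
      + Cd * ((1 + Ad)⁻¹ * Bd) =
      (2 / (1 + s)) • (Cd * (((1 : Matrix (Fin n) (Fin n) ℂ) - ζ s • Ad)⁻¹ * ((1 + Ad)⁻¹ * Bd))) := by
    have h := congrArg (fun X => Cd * (X * Bd)) key3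
    simp only [Matrix.add_mul, Matrix.smul_mul, Matrix.mul_add, Matrix.mul_smul,
      Matrix.mul_assoc] at h
    exact h
  have hsq : ((Real.sqrt 2 : ℝ) : ℂ) * ((Real.sqrt 2 : ℝ) : ℂ) = 2 := by
    rw [← Complex.ofReal_mul, Real.mul_self_sqrt (by norm_num : (0:ℝ) ≤ 2)]
    norm_num
  have hsc : ((Real.sqrt 2 : ℝ) : ℂ) * ((1 + s)⁻¹ * ((Real.sqrt 2 : ℝ) : ℂ)) = 2 / (1 + s) := by
    rw [div_eq_mul_inv]
    linear_combination (1 + s)⁻¹ * hsq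
  have cancel : ∀ (X : Matrix (Fin n) (Fin m) ℂ),
      ((1 : Matrix (Fin n) (Fin n) ℂ) + Ad)⁻¹ * ((1 + Ad) * X) = X := fun X => by
    rw [← Matrix.mul_assoc, hTi', Matrix.one_mul]
  rw [hDc, hCc, hBc, hinv]
  simp only [Matrix.smul_mul, Matrix.mul_smul, smul_smul, Matrix.mul_assoc]
  rw [cancel, hsc, ← hk]
  abel
end

section
/- Let A_d be an n×n complex matrix with I + A_d invertible, B_d an n×m matrix, C_d an m×n matrix, and D_d an m×m matrix, and let A_c, B_c, C_c, D_c be their Cayley transforms. Then the following are equivalent: (i) every eigenvalue of A_d lies in the open unit disc and the (n+m)×(n+m) block matrix [[A_d, B_d], [C_d, D_d]] is unitary; (ii) every eigenvalue of A_c has negative real part, A_c + A_c* + C_c*C_c = 0, D_c is unitary, and B_c = −C_c*D_c. -/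
/-!
The scalar Cayley map `ζ z = (z - 1) / (1 + z)` sends the open unit disc onto the open left half
plane, and `A_c = 1 - 2 (1 + A_d)⁻¹` has spectrum `ζ '' σ(A_d)`; this matches the two stability
conditions.

For the algebraic conditions write `B_d = (1 + A_d) V`, so that every identity becomes polynomial.
Congruence by the invertible matrix `1 + A_d` turns the three dissipativity conditions into the
three blocks of `Uᴴ U = 1` for `U = [[A_d, B_d], [C_d, D_d]]`:
`(1 + A)ᴴ (A_c + A_cᴴ + C_cᴴ C_c) (1 + A) = 2 (Aᴴ A + Cᴴ C - 1)`, then, once `Aᴴ A + Cᴴ C = 1`,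
`(1 + A)ᴴ (B_c + C_cᴴ D_c) = √2 (Aᴴ B + Cᴴ D)`, and, once also `Aᴴ B + Cᴴ D = 0`,
`D_cᴴ D_c = Bᴴ B + Dᴴ D`. Finally `Uᴴ U = 1` already forces `U Uᴴ = 1` for square `U`.
-/

open Matrix
open scoped Pointwise

lemma one_add_ne_zero_of_mem_spectrum {R A : Type*} [CommRing R] [Ring A] [Algebra R A] {a : A}
    (ha : IsUnit (1 + a)) {z : R} (hz : z ∈ spectrum R a) : 1 + z ≠ 0 := by
  intro h
  rw [eq_neg_of_add_eq_zero_right h, spectrum.mem_iff, map_neg, map_one, ← neg_add'] at hz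
  exact hz ha.neg

lemma spectrum_sub_one_mul_ringInverse {𝕜 A : Type*} [Field 𝕜] [NeZero (2 : 𝕜)] [Ring A]
    [Algebra 𝕜 A] {a : A} (ha : IsUnit (1 + a)) :
    spectrum 𝕜 ((a - 1) * Ring.inverse (1 + a)) =
      (fun z => (z - 1) / (1 + z)) '' spectrum 𝕜 a := by
  obtain ⟨u, hu⟩ := ha
  let c : 𝕜ˣ := Units.mk0 (-2) (neg_ne_zero.mpr two_ne_zero)
  -- `(a - 1) (1 + a)⁻¹ = 1 - 2 (1 + a)⁻¹`: push the spectrum through `z ↦ 1 - 2 / (1 + z)`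
  have hsplit : (a - 1) * Ring.inverse (1 + a) = algebraMap 𝕜 A 1 + c • (↑u⁻¹ : A) := by
    have : a - 1 = (u : A) - 2 := by rw [hu, ← one_add_one_eq_two]; abel
    rw [← hu, Ring.inverse_unit, this, sub_mul, Units.mul_inv, map_one, Units.smul_def,
      Units.val_mk0, neg_smul, ← sub_eq_add_neg, ofNat_smul_eq_nsmul, nsmul_eq_mul, Nat.cast_ofNat]
  have hu' : (u : A) = algebraMap 𝕜 A 1 + a := by rw [hu, map_one]
  rw [hsplit, ← spectrum.singleton_add_eq, spectrum.unit_smul_eq_smul, ← spectrum.map_inv, hu',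
    ← spectrum.singleton_add_eq, Set.singleton_add, Set.singleton_add, ← Set.image_smul,
    ← Set.image_inv_eq_inv, Set.image_image, Set.image_image, Set.image_image]
  refine Set.image_congr fun z hz => ?_
  have hz : 1 + z ≠ 0 := one_add_ne_zero_of_mem_spectrum (hu ▸ u.isUnit) hz
  simp only [c, Units.smul_def, Units.val_mk0, smul_eq_mul]
  field_simp
  ring

lemma re_sub_one_div_one_add_neg_iff {z : ℂ} (hz : 1 + z ≠ 0) :
    ((z - 1) / (1 + z)).re < 0 ↔ ‖z‖ < 1 := by
  have hre : ((z - 1) / (1 + z)).re = (‖z‖ ^ 2 - 1) / Complex.normSq (1 + z) := by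
    rw [Complex.div_re, ← add_div, ← Complex.normSq_eq_norm_sq]
    congr 1
    simp only [Complex.normSq_apply, Complex.sub_re, Complex.add_re, Complex.sub_im,
      Complex.add_im, Complex.one_re, Complex.one_im]
    ring
  rw [hre, div_lt_iff₀ (Complex.normSq_pos.mpr hz), zero_mul, sub_neg,
    sq_lt_one_iff₀ (norm_nonneg z)]

lemma forall_spectrum_norm_lt_one_iff {A : Type*} [Ring A] [Algebra ℂ A] {a : A}
    (ha : IsUnit (1 + a)) :
    (∀ z ∈ spectrum ℂ a, ‖z‖ < 1) ↔
      ∀ w ∈ spectrum ℂ ((a - 1) * Ring.inverse (1 + a)), w.re < 0 := by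
  rw [spectrum_sub_one_mul_ringInverse ha, Set.forall_mem_image]
  exact forall₂_congr fun z hz =>
    (re_sub_one_div_one_add_neg_iff (one_add_ne_zero_of_mem_spectrum ha hz)).symm

lemma fromBlocks_conjTranspose_mul_self_eq_one_iff {l m α : Type*} [Fintype l] [Fintype m]
    [DecidableEq l] [DecidableEq m] [CommRing α] [StarRing α]
    {A : Matrix l l α} {B : Matrix l m α} {C : Matrix m l α} {D : Matrix m m α} :
    (fromBlocks A B C D)ᴴ * fromBlocks A B C D = 1 ↔
      Aᴴ * A + Cᴴ * C = 1 ∧ Aᴴ * B + Cᴴ * D = 0 ∧ Bᴴ * B + Dᴴ * D = 1 := by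
  have hlower : Bᴴ * A + Dᴴ * C = (Aᴴ * B + Cᴴ * D)ᴴ := by
    simp only [conjTranspose_add, conjTranspose_mul, conjTranspose_conjTranspose]
  rw [fromBlocks_conjTranspose, fromBlocks_multiply, ← fromBlocks_one, fromBlocks_inj, hlower,
    conjTranspose_eq_zero]
  tauto

section Cayley

variable {n m p α : Type*} [Fintype n] [DecidableEq n] [Fintype p]
  [CommRing α] [StarRing α] {A : Matrix n n α} {C : Matrix p n α}

lemma cayley_lyapunov_congr {Ac : Matrix n n α} {Cc : Matrix p n α} {s : α}
    (hAc : Ac * (1 + A) = A - 1) (hCc : Cc * (1 + A) = s • C) (hs : star s * s = 2) :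
    (1 + A)ᴴ * (Ac + Acᴴ + Ccᴴ * Cc) * (1 + A) = (2 : α) • (Aᴴ * A + Cᴴ * C - 1) := by
  have hCC : (1 + A)ᴴ * (Ccᴴ * Cc) * (1 + A) = (2 : α) • (Cᴴ * C) := by
    rw [← hs, ← smul_smul, Matrix.mul_assoc, Matrix.mul_assoc, hCc, ← Matrix.mul_assoc,
      ← conjTranspose_mul, hCc, conjTranspose_smul, Matrix.smul_mul, Matrix.mul_smul]
  have hA : (1 + A)ᴴ * Ac * (1 + A) = (1 + A)ᴴ * (A - 1) := by rw [Matrix.mul_assoc, hAc]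
  have hAH : (1 + A)ᴴ * Acᴴ * (1 + A) = (A - 1)ᴴ * (1 + A) := by
    rw [← conjTranspose_mul, hAc]
  rw [Matrix.mul_add (1 + A)ᴴ, Matrix.mul_add (1 + A)ᴴ, Matrix.add_mul _ _ (1 + A),
    Matrix.add_mul _ _ (1 + A), hA, hAH, hCC]
  simp only [conjTranspose_add, conjTranspose_sub, conjTranspose_one, Matrix.add_mul,
    Matrix.sub_mul, Matrix.mul_add, Matrix.mul_sub, Matrix.one_mul, Matrix.mul_one, smul_sub,
    smul_add, two_smul]
  abel

lemma cayley_cross_term_congr {B : Matrix n m α} {D : Matrix p m α} {V : Matrix n m α}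
    {Cc : Matrix p n α} {s : α} (hB : B = (1 + A) * V) (hCc : Cc * (1 + A) = s • C)
    (hs : star s = s) :
    (1 + A)ᴴ * (s • V + Ccᴴ * (D - C * V)) =
      s • (Aᴴ * B + Cᴴ * D - (Aᴴ * A + Cᴴ * C - 1) * V) := by
  have hCc' : (1 + A)ᴴ * Ccᴴ = s • Cᴴ := by
    rw [← conjTranspose_mul, hCc, conjTranspose_smul, hs]
  rw [Matrix.mul_add, ← Matrix.mul_assoc, hCc', hB]
  simp only [conjTranspose_add, conjTranspose_one, Matrix.mul_smul, Matrix.smul_mul,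
    Matrix.add_mul, Matrix.mul_add, Matrix.mul_sub, Matrix.sub_mul, Matrix.one_mul,
    Matrix.mul_assoc, smul_add, smul_sub]
  abel

lemma cayley_D_conjTranspose_mul_self {B : Matrix n m α} {D : Matrix p m α} {V : Matrix n m α}
    (hB : B = (1 + A) * V) :
    (D - C * V)ᴴ * (D - C * V) = Bᴴ * B + Dᴴ * D - (Aᴴ * B + Cᴴ * D)ᴴ * V
      - Vᴴ * (Aᴴ * B + Cᴴ * D) + Vᴴ * (Aᴴ * A + Cᴴ * C - 1) * V := by
  subst hB
  simp only [conjTranspose_add, conjTranspose_sub, conjTranspose_mul, conjTranspose_conjTranspose,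
    Matrix.add_mul, Matrix.mul_add, Matrix.mul_sub, Matrix.sub_mul, Matrix.one_mul,
    Matrix.mul_one, Matrix.mul_assoc]
  abel

end Cayley

section Field

variable {n m p 𝕜 : Type*} [Fintype n] [DecidableEq n] [Fintype p]
  [Field 𝕜] [StarRing 𝕜] {A : Matrix n n 𝕜} {C : Matrix p n 𝕜} {s : 𝕜}

lemma cayley_lyapunov_eq_zero_iff [NeZero (2 : 𝕜)] {Ac : Matrix n n 𝕜} {Cc : Matrix p n 𝕜}
    (hA : IsUnit (1 + A)) (hAc : Ac * (1 + A) = A - 1) (hCc : Cc * (1 + A) = s • C)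
    (hs : star s * s = 2) :
    Ac + Acᴴ + Ccᴴ * Cc = 0 ↔ Aᴴ * A + Cᴴ * C = 1 := by
  calc Ac + Acᴴ + Ccᴴ * Cc = 0 ↔ (1 + A)ᴴ * (Ac + Acᴴ + Ccᴴ * Cc) * (1 + A) = 0 := by
        rw [hA.mul_left_eq_zero, ((isUnit_conjTranspose _).mpr hA).mul_right_eq_zero]
    _ ↔ Aᴴ * A + Cᴴ * C = 1 := by
        rw [cayley_lyapunov_congr hAc hCc hs, smul_eq_zero, sub_eq_zero,
          or_iff_right two_ne_zero]

lemma cayley_B_eq_neg_iff {B : Matrix n m 𝕜} {D : Matrix p m 𝕜} {V : Matrix n m 𝕜}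
    {Cc : Matrix p n 𝕜} (hA : IsUnit (1 + A)) (hB : B = (1 + A) * V)
    (hCc : Cc * (1 + A) = s • C) (hs : star s = s) (hs0 : s ≠ 0) (hAC : Aᴴ * A + Cᴴ * C = 1) :
    s • V = -(Ccᴴ * (D - C * V)) ↔ Aᴴ * B + Cᴴ * D = 0 := by
  let := ((isUnit_conjTranspose _).mpr hA).invertible
  rw [eq_neg_iff_add_eq_zero,
    ← (mul_right_injective_of_invertible (1 + A)ᴴ).eq_iff' (Matrix.mul_zero _),
    cayley_cross_term_congr hB hCc hs, hAC, sub_self, Matrix.zero_mul, sub_zero, smul_eq_zero,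
    or_iff_right hs0]

end Field

theorem stmt_14 {n m : ℕ}
    (Ad : Matrix (Fin n) (Fin n) ℂ) (Bd : Matrix (Fin n) (Fin m) ℂ)
    (Cd : Matrix (Fin m) (Fin n) ℂ) (Dd : Matrix (Fin m) (Fin m) ℂ)
    (hAd : IsUnit ((1 : Matrix (Fin n) (Fin n) ℂ) + Ad))
    (Ac : Matrix (Fin n) (Fin n) ℂ) (Bc : Matrix (Fin n) (Fin m) ℂ)
    (Cc : Matrix (Fin m) (Fin n) ℂ) (Dc : Matrix (Fin m) (Fin m) ℂ)
    (hAc : Ac = (Ad - 1) * (1 + Ad)⁻¹)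
    (hBc : Bc = (Real.sqrt 2 : ℂ) • ((1 + Ad)⁻¹ * Bd))
    (hCc : Cc = (Real.sqrt 2 : ℂ) • (Cd * (1 + Ad)⁻¹))
    (hDc : Dc = Dd - Cd * (1 + Ad)⁻¹ * Bd) :
    ((∀ z ∈ spectrum ℂ Ad, ‖z‖ < 1) ∧
        (Matrix.fromBlocks Ad Bd Cd Dd)ᴴ * Matrix.fromBlocks Ad Bd Cd Dd = 1 ∧
        Matrix.fromBlocks Ad Bd Cd Dd * (Matrix.fromBlocks Ad Bd Cd Dd)ᴴ = 1) ↔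
      ((∀ z ∈ spectrum ℂ Ac, z.re < 0) ∧
        Ac + Acᴴ + Ccᴴ * Cc = 0 ∧ Dcᴴ * Dc = 1 ∧ Bc = -(Ccᴴ * Dc)) := by
  have hdet : IsUnit (1 + Ad).det := (isUnit_iff_isUnit_det _).mp hAd
  have hB : Bd = (1 + Ad) * ((1 + Ad)⁻¹ * Bd) := (mul_nonsing_inv_cancel_left _ Bd hdet).symm
  have hAcA : Ac * (1 + Ad) = Ad - 1 := by rw [hAc, nonsing_inv_mul_cancel_right _ _ hdet]
  have hCcA : Cc * (1 + Ad) = (Real.sqrt 2 : ℂ) • Cd := by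
    rw [hCc, Matrix.smul_mul, nonsing_inv_mul_cancel_right _ _ hdet]
  have hs : star (Real.sqrt 2 : ℂ) = Real.sqrt 2 := Complex.conj_ofReal _
  have hs2 : star (Real.sqrt 2 : ℂ) * Real.sqrt 2 = 2 := by
    rw [hs, ← Complex.ofReal_mul, Real.mul_self_sqrt zero_le_two, Complex.ofReal_ofNat]
  have hs0 : (Real.sqrt 2 : ℂ) ≠ 0 := Complex.ofReal_ne_zero.mpr (Real.sqrt_ne_zero'.mpr two_pos)
  have hlyap := cayley_lyapunov_eq_zero_iff hAd hAcA hCcA hs2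
  have hcross := fun hAC => cayley_B_eq_neg_iff (D := Dd) hAd hB hCcA hs hs0 hAC
  have hspec : (∀ z ∈ spectrum ℂ Ad, ‖z‖ < 1) ↔ ∀ z ∈ spectrum ℂ Ac, z.re < 0 := by
    rw [hAc, nonsing_inv_eq_ringInverse]
    exact forall_spectrum_norm_lt_one_iff hAd
  rw [hspec, hBc, hDc, Matrix.mul_assoc Cd]
  constructor
  · rintro ⟨hstable, hU, -⟩
    obtain ⟨hAC, hAB, hBD⟩ := fromBlocks_conjTranspose_mul_self_eq_one_iff.mp hU
    refine ⟨hstable, hlyap.mpr hAC, ?_, (hcross hAC).mpr hAB⟩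
    rw [cayley_D_conjTranspose_mul_self hB, hAC, hAB, hBD]
    simp
  · rintro ⟨hstable, hL, hD, hBneg⟩
    have hAC := hlyap.mp hL
    have hAB := (hcross hAC).mp hBneg
    rw [cayley_D_conjTranspose_mul_self hB, hAC, hAB] at hD
    have hU := fromBlocks_conjTranspose_mul_self_eq_one_iff.mpr ⟨hAC, hAB, by simpa using hD⟩
    exact ⟨hstable, hU, mul_eq_one_comm.mp hU⟩
end

section
/- Let A_d be an n×n complex matrix with I + A_d invertible and C_d an m×n complex matrix, and set A_c = (A_d − I)(I + A_d)^{-1} and C_c = √2·C_d(I + A_d)^{-1}. Then A_c + A_c* + C_c*C_c = 2·(I + A_d*)^{-1}(A_d*A_d + C_d*C_d − I)(I + A_d)^{-1}; consequently, A_c + A_c* + C_c*C_c = 0 if and only if A_d*A_d + C_d*C_d = I. -/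
open Matrix

theorem stmt_16 {n m : ℕ}
    (Ad : Matrix (Fin n) (Fin n) ℂ) (Cd : Matrix (Fin m) (Fin n) ℂ)
    (hAd : IsUnit ((1 : Matrix (Fin n) (Fin n) ℂ) + Ad))
    (Ac : Matrix (Fin n) (Fin n) ℂ) (Cc : Matrix (Fin m) (Fin n) ℂ)
    (hAc : Ac = (Ad - 1) * (1 + Ad)⁻¹)
    (hCc : Cc = (Real.sqrt 2 : ℂ) • (Cd * (1 + Ad)⁻¹)) :
    Ac + Acᴴ + Ccᴴ * Cc =
        (2 : ℂ) • ((1 + Adᴴ)⁻¹ * (Adᴴ * Ad + Cdᴴ * Cd - 1) * (1 + Ad)⁻¹) ∧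
      (Ac + Acᴴ + Ccᴴ * Cc = 0 ↔ Adᴴ * Ad + Cdᴴ * Cd = 1) := by
  have hdet : IsUnit (1 + Ad).det := (Matrix.isUnit_iff_isUnit_det _).mp hAd
  set S := (1 + Ad)⁻¹ with hS
  set Z := Cdᴴ * Cd with hZ
  have hinv : (1 + Ad) * S = 1 := Matrix.mul_nonsing_inv _ hdet
  have hinv' : S * (1 + Ad) = 1 := Matrix.nonsing_inv_mul _ hdet
  have hct : (1 + Adᴴ)⁻¹ = Sᴴ := by
    rw [hS, Matrix.conjTranspose_nonsing_inv]
    simp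
  have h1 : Sᴴ * (1 + Adᴴ) = 1 := by
    have := congrArg conjTranspose hinv
    simpa using this
  have h2 : (1 + Adᴴ) * Sᴴ = 1 := by
    have := congrArg conjTranspose hinv'
    simpa using this
  have hsq : (Real.sqrt 2 : ℂ) * (Real.sqrt 2 : ℂ) = 2 := by
    rw [← Complex.ofReal_mul]
    norm_num [Real.mul_self_sqrt]
  have hCcC : Ccᴴ * Cc = (2 : ℂ) • (Sᴴ * Z * S) := by
    rw [hCc]
    rw [conjTranspose_smul, conjTranspose_mul, Matrix.smul_mul, Matrix.mul_smul,
      smul_smul, Complex.star_def, Complex.conj_ofReal, hsq, Matrix.mul_assoc,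
      ← Matrix.mul_assoc Cdᴴ, ← hZ, ← Matrix.mul_assoc, ← Matrix.mul_assoc]
  have hAcT : Acᴴ = Sᴴ * (Adᴴ - 1) := by
    rw [hAc]; simp [conjTranspose_mul]
  have hAc2 : Ac = Sᴴ * ((1 + Adᴴ) * (Ad - 1)) * S := by
    rw [hAc, ← Matrix.mul_assoc Sᴴ, h1, Matrix.one_mul]
  have hAcT2 : Acᴴ = Sᴴ * ((Adᴴ - 1) * (1 + Ad)) * S := by
    rw [hAcT, Matrix.mul_assoc Sᴴ, Matrix.mul_assoc, hinv, Matrix.mul_one]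
  have key : Ac + Acᴴ + Ccᴴ * Cc =
      (2 : ℂ) • (Sᴴ * (Adᴴ * Ad + Z - 1) * S) := by
    rw [hAcT2, hAc2, hCcC, two_smul, two_smul]
    noncomm_ring
  refine ⟨by rw [key, hct], ?_⟩
  rw [key]
  constructor
  · intro h
    have h0 : Sᴴ * (Adᴴ * Ad + Z - 1) * S = 0 := by
      have h2' : (2:ℂ) ≠ 0 := by norm_num
      exact (smul_eq_zero.mp h).resolve_left h2'
    have hM := congrArg (fun X => (1 + Adᴴ) * X * (1 + Ad)) h0
    simp only [Matrix.mul_zero, Matrix.zero_mul] at hM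
    rw [← Matrix.mul_assoc, ← Matrix.mul_assoc, h2, Matrix.one_mul,
      Matrix.mul_assoc, hinv', Matrix.mul_one] at hM
    exact sub_eq_zero.mp hM
  · intro h
    rw [h]
    simp
end

section
/- Let A_d be an n×n complex matrix with I + A_d invertible, B_d an n×m matrix, C_d an m×n matrix, D_d an m×m matrix, and let A_c, B_c, C_c, D_c be their Cayley transforms. Assume A_c + A_c* + C_c*C_c = 0. Then A_d*B_d + C_d*D_d = √2·(I − A_c*)^{-1}(B_c + C_c*D_c); consequently, A_d*B_d + C_d*D_d = 0 if and only if B_c = −C_c*D_c. -/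
open Matrix

theorem stmt_17 {n m : ℕ}
    (Ad : Matrix (Fin n) (Fin n) ℂ) (Bd : Matrix (Fin n) (Fin m) ℂ)
    (Cd : Matrix (Fin m) (Fin n) ℂ) (Dd : Matrix (Fin m) (Fin m) ℂ)
    (hAd : IsUnit ((1 : Matrix (Fin n) (Fin n) ℂ) + Ad))
    (Ac : Matrix (Fin n) (Fin n) ℂ) (Bc : Matrix (Fin n) (Fin m) ℂ)
    (Cc : Matrix (Fin m) (Fin n) ℂ) (Dc : Matrix (Fin m) (Fin m) ℂ)
    (hAc : Ac = (Ad - 1) * (1 + Ad)⁻¹)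
    (hBc : Bc = (Real.sqrt 2 : ℂ) • ((1 + Ad)⁻¹ * Bd))
    (hCc : Cc = (Real.sqrt 2 : ℂ) • (Cd * (1 + Ad)⁻¹))
    (hDc : Dc = Dd - Cd * (1 + Ad)⁻¹ * Bd)
    (hdiss : Ac + Acᴴ + Ccᴴ * Cc = 0) :
    Adᴴ * Bd + Cdᴴ * Dd =
        (Real.sqrt 2 : ℂ) • ((1 - Acᴴ)⁻¹ * (Bc + Ccᴴ * Dc)) ∧
      (Adᴴ * Bd + Cdᴴ * Dd = 0 ↔ Bc = -(Ccᴴ * Dc)) := by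
  set s : ℂ := (Real.sqrt 2 : ℂ) with hs
  have hs2 : s * s = 2 := by
    rw [hs, ← Complex.ofReal_mul, Real.mul_self_sqrt (by norm_num)]; norm_num
  have hsc : star s = s := by
    rw [hs]; simp [Complex.star_def, Complex.conj_ofReal]
  set T : Matrix (Fin n) (Fin n) ℂ := 1 + Ad with hT
  set S : Matrix (Fin n) (Fin n) ℂ := T⁻¹ with hSdef
  have hdet : IsUnit T.det := (Matrix.isUnit_iff_isUnit_det T).mp hAd
  have hTS : T * S = 1 := Matrix.mul_nonsing_inv T hdet
  have hST : S * T = 1 := Matrix.nonsing_inv_mul T hdet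
  have hTc : Tᴴ = 1 + Adᴴ := by rw [hT]; simp
  have hSTc : Tᴴ * Sᴴ = 1 := by rw [← conjTranspose_mul, hST]; simp
  have hTSc : Sᴴ * Tᴴ = 1 := by rw [← conjTranspose_mul, hTS]; simp
  -- 1 - Ac = 2 • S
  have h1Ac : (1 : Matrix (Fin n) (Fin n) ℂ) - Ac = (2:ℂ) • S := by
    rw [hAc]
    have h2 : (T - (Ad - 1)) = ((2:ℂ) • (1 : Matrix (Fin n) (Fin n) ℂ)) := by
      rw [hT]; rw [two_smul]; abel
    calc (1 : Matrix (Fin n) (Fin n) ℂ) - (Ad - 1) * S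
        = T * S - (Ad - 1) * S := by rw [hTS]
      _ = (T - (Ad - 1)) * S := by rw [Matrix.sub_mul T (Ad - 1) S]
      _ = ((2:ℂ) • (1 : Matrix (Fin n) (Fin n) ℂ)) * S := by rw [h2]
      _ = (2:ℂ) • S := by rw [Matrix.smul_mul, Matrix.one_mul]
  have h1Acs : (1 : Matrix (Fin n) (Fin n) ℂ) - Acᴴ = (2:ℂ) • Sᴴ := by
    have := congrArg conjTranspose h1Ac
    simpa [conjTranspose_sub, conjTranspose_smul] using this
  have hinv : ((1 : Matrix (Fin n) (Fin n) ℂ) - Acᴴ)⁻¹ = (1/2 : ℂ) • Tᴴ := by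
    apply Matrix.inv_eq_right_inv
    rw [h1Acs, Matrix.smul_mul, Matrix.mul_smul, smul_smul, hTSc]
    norm_num
  -- conj transposes of Cayley pieces
  have hAcc : Acᴴ = Sᴴ * (Adᴴ - 1) := by
    rw [hAc, conjTranspose_mul]; simp
  have hCcc : Ccᴴ = s • (Sᴴ * Cdᴴ) := by
    rw [hCc, conjTranspose_smul, hsc, conjTranspose_mul]
  -- key relation from dissipativity
  have K0 : Tᴴ * (Ad - 1) + (Adᴴ - 1) * T + (2:ℂ) • (Cdᴴ * Cd) = 0 := by
    have h := congrArg (fun M => Tᴴ * M * T) hdiss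
    simp only [Matrix.mul_zero, Matrix.zero_mul, Matrix.add_mul, Matrix.mul_add] at h
    rw [hAcc, hCcc, hCc, hAc] at h
    have e1 : Tᴴ * ((Ad - 1) * S) * T = Tᴴ * (Ad - 1) := by
      rw [Matrix.mul_assoc, Matrix.mul_assoc, hST, Matrix.mul_one]
    have e2 : Tᴴ * (Sᴴ * (Adᴴ - 1)) * T = (Adᴴ - 1) * T := by
      rw [← Matrix.mul_assoc, hSTc, Matrix.one_mul]
    have e3 : Tᴴ * ((s • (Sᴴ * Cdᴴ)) * (s • (Cd * S))) * T = (2:ℂ) • (Cdᴴ * Cd) := by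
      simp only [Matrix.smul_mul, Matrix.mul_smul, smul_smul, hs2]
      congr 1
      calc Tᴴ * (Sᴴ * Cdᴴ * (Cd * S)) * T
          = (Tᴴ * Sᴴ) * (Cdᴴ * Cd) * (S * T) := by
            simp only [Matrix.mul_assoc]
        _ = Cdᴴ * Cd := by rw [hSTc, hST, Matrix.one_mul, Matrix.mul_one]
    rw [e1, e2, e3] at h
    exact h
  -- derive K : Adᴴ + CdᴴCd S = Tᴴ S
  have h2c : (2:ℂ) • (Cdᴴ * Cd) = 0 - Tᴴ * (Ad - 1) - (Adᴴ - 1) * T := by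
    rw [← K0]; abel
  have Keq2 : (2:ℂ) • (Adᴴ * T + Cdᴴ * Cd) = (2:ℂ) • Tᴴ := by
    rw [smul_add, h2c, hTc, hT]
    rw [two_smul, two_smul]
    simp only [Matrix.mul_add, Matrix.add_mul, Matrix.mul_one, Matrix.one_mul,
      Matrix.sub_mul, Matrix.mul_sub]
    abel
  have Keq : Adᴴ * T + Cdᴴ * Cd = Tᴴ :=
    smul_right_injective _ (two_ne_zero) Keq2
  have K : Adᴴ + Cdᴴ * Cd * S = Tᴴ * S := by
    have := congrArg (fun M => M * S) Keq
    simpa [Matrix.add_mul, Matrix.mul_assoc, hTS] using this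
  -- main equality
  have E : Adᴴ * Bd + Cdᴴ * Dd = s • ((1 - Acᴴ)⁻¹ * (Bc + Ccᴴ * Dc)) := by
    have hsum : Bc + Ccᴴ * Dc = s • (S * Bd + Sᴴ * Cdᴴ * (Dd - Cd * S * Bd)) := by
      rw [hBc, hCcc, hDc, smul_add, Matrix.smul_mul]
    rw [hinv, hsum, Matrix.smul_mul, Matrix.mul_smul, smul_smul, smul_smul]
    have hcoef : s * (1/2) * s = 1 := by
      field_simp; linear_combination hs2
    rw [hcoef, one_smul, Matrix.mul_add]
    have e1 : Tᴴ * (S * Bd) = (Tᴴ * S) * Bd := by rw [Matrix.mul_assoc]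
    have e2 : Tᴴ * (Sᴴ * Cdᴴ * (Dd - Cd * S * Bd))
        = Cdᴴ * Dd - Cdᴴ * Cd * S * Bd := by
      calc Tᴴ * (Sᴴ * Cdᴴ * (Dd - Cd * S * Bd))
          = (Tᴴ * Sᴴ) * (Cdᴴ * (Dd - Cd * S * Bd)) := by
            simp only [Matrix.mul_assoc]
        _ = Cdᴴ * (Dd - Cd * S * Bd) := by rw [hSTc, Matrix.one_mul]
        _ = Cdᴴ * Dd - Cdᴴ * Cd * S * Bd := by
            rw [Matrix.mul_sub]; simp only [Matrix.mul_assoc]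
    rw [e1, e2, ← K, Matrix.add_mul]
    abel
  refine ⟨E, ?_⟩
  have hs0 : s ≠ 0 := by
    rw [hs]; norm_cast; positivity
  constructor
  · intro h0
    have h0' : s • (((1/2 : ℂ) • Tᴴ) * (Bc + Ccᴴ * Dc)) = 0 := by
      rw [← hinv, ← E]; exact h0
    have h1 : ((1/2 : ℂ) • Tᴴ) * (Bc + Ccᴴ * Dc) = 0 := by
      rcases smul_eq_zero.mp h0' with h | h
      · exact absurd h hs0
      · exact h
    rw [Matrix.smul_mul] at h1
    have h2 : Tᴴ * (Bc + Ccᴴ * Dc) = 0 := by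
      rcases smul_eq_zero.mp h1 with h | h
      · norm_num at h
      · exact h
    have h3 : Bc + Ccᴴ * Dc = 0 := by
      have := congrArg (fun M => Sᴴ * M) h2
      simpa [← Matrix.mul_assoc, hTSc] using this
    exact eq_neg_of_add_eq_zero_left h3
  · intro h
    rw [E, h]
    simp
end

section
/- Let A_cv be an n_v×n_v complex matrix with I − A_cv invertible and A_cw an n_w×n_w complex matrix with I − A_cw invertible, let B_cv be n_v×m and B_cw be n_w×m, and set A_dv = (I − A_cv)^{-1}(A_cv + I), B_dv = √2·(I − A_cv)^{-1}B_cv, A_dw = (I − A_cw)^{-1}(A_cw + I), B_dw = √2·(I − A_cw)^{-1}B_cw. Then an n_v×n_w complex matrix Ω satisfies the Stein equation Ω = A_dv·Ω·A_dw* + B_dv·B_dw* if and only if Ω satisfies the Lyapunov equation A_cv·Ω + Ω·A_cw* + B_cv·B_cw* = 0. -/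
open Matrix

theorem stmt_18 {nv nw m : ℕ}
    (Acv : Matrix (Fin nv) (Fin nv) ℂ) (Acw : Matrix (Fin nw) (Fin nw) ℂ)
    (hv : IsUnit ((1 : Matrix (Fin nv) (Fin nv) ℂ) - Acv))
    (hw : IsUnit ((1 : Matrix (Fin nw) (Fin nw) ℂ) - Acw))
    (Bcv : Matrix (Fin nv) (Fin m) ℂ) (Bcw : Matrix (Fin nw) (Fin m) ℂ)
    (Adv : Matrix (Fin nv) (Fin nv) ℂ) (Bdv : Matrix (Fin nv) (Fin m) ℂ)
    (Adw : Matrix (Fin nw) (Fin nw) ℂ) (Bdw : Matrix (Fin nw) (Fin m) ℂ)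
    (hAdv : Adv = (1 - Acv)⁻¹ * (Acv + 1))
    (hBdv : Bdv = (Real.sqrt 2 : ℂ) • ((1 - Acv)⁻¹ * Bcv))
    (hAdw : Adw = (1 - Acw)⁻¹ * (Acw + 1))
    (hBdw : Bdw = (Real.sqrt 2 : ℂ) • ((1 - Acw)⁻¹ * Bcw))
    (Ω : Matrix (Fin nv) (Fin nw) ℂ) :
    Ω = Adv * Ω * Adwᴴ + Bdv * Bdwᴴ ↔ Acv * Ω + Ω * Acwᴴ + Bcv * Bcwᴴ = 0 := by
  subst hAdv hBdv hAdw hBdw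
  set P := (1 : Matrix (Fin nv) (Fin nv) ℂ) - Acv with hPdef
  set Q := (1 : Matrix (Fin nw) (Fin nw) ℂ) - Acw with hQdef
  have hPd : IsUnit P.det := (Matrix.isUnit_iff_isUnit_det P).mp hv
  have hQd : IsUnit Q.det := (Matrix.isUnit_iff_isUnit_det Q).mp hw
  have hP1 : P⁻¹ * P = 1 := Matrix.nonsing_inv_mul P hPd
  have hP2 : P * P⁻¹ = 1 := Matrix.mul_nonsing_inv P hPd
  have hQ1 : Qᴴ * (Q⁻¹)ᴴ = 1 := by
    rw [← Matrix.conjTranspose_mul, Matrix.nonsing_inv_mul Q hQd, Matrix.conjTranspose_one]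
  have hQ2 : (Q⁻¹)ᴴ * Qᴴ = 1 := by
    rw [← Matrix.conjTranspose_mul, Matrix.mul_nonsing_inv Q hQd, Matrix.conjTranspose_one]
  have h2 : ((Real.sqrt 2 : ℝ) : ℂ) * ((Real.sqrt 2 : ℝ) : ℂ) = 2 := by
    rw [← Complex.ofReal_mul, Real.mul_self_sqrt (by norm_num : (0:ℝ) ≤ 2)]
    norm_num
  have lem : ∀ (X : Matrix (Fin nv) (Fin nw) ℂ), P * (P⁻¹ * X * (Q⁻¹)ᴴ) * Qᴴ = X := by
    intro X
    calc P * (P⁻¹ * X * (Q⁻¹)ᴴ) * Qᴴ = (P * P⁻¹) * (X * ((Q⁻¹)ᴴ * Qᴴ)) := by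
          simp only [Matrix.mul_assoc]
      _ = X := by rw [hP2, hQ2, Matrix.one_mul, Matrix.mul_one]
  have lem2 : ∀ (X : Matrix (Fin nv) (Fin nw) ℂ), P⁻¹ * (P * X * Qᴴ) * (Q⁻¹)ᴴ = X := by
    intro X
    calc P⁻¹ * (P * X * Qᴴ) * (Q⁻¹)ᴴ = (P⁻¹ * P) * (X * (Qᴴ * (Q⁻¹)ᴴ)) := by
          simp only [Matrix.mul_assoc]
      _ = X := by rw [hP1, hQ1, Matrix.one_mul, Matrix.mul_one]
  have cancel : ∀ (X Y : Matrix (Fin nv) (Fin nw) ℂ), X = Y ↔ P * X * Qᴴ = P * Y * Qᴴ := by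
    intro X Y
    constructor
    · intro h; rw [h]
    · intro h; rw [← lem2 X, ← lem2 Y, h]
  have factor : (P⁻¹ * (Acv + 1)) * Ω * ((Q⁻¹ * (Acw + 1))ᴴ)
        + ((Real.sqrt 2 : ℂ) • (P⁻¹ * Bcv)) * (((Real.sqrt 2 : ℂ) • (Q⁻¹ * Bcw))ᴴ)
      = P⁻¹ * ((Acv + 1) * Ω * (Acwᴴ + 1) + (2 : ℂ) • (Bcv * Bcwᴴ)) * (Q⁻¹)ᴴ := by
    rw [Matrix.conjTranspose_smul, Complex.star_def, Complex.conj_ofReal,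
      Matrix.conjTranspose_mul, Matrix.conjTranspose_mul, Matrix.conjTranspose_add,
      Matrix.conjTranspose_one]
    rw [Matrix.smul_mul, Matrix.mul_smul, smul_smul, h2]
    simp only [Matrix.mul_add, Matrix.add_mul, Matrix.mul_smul, Matrix.smul_mul,
      Matrix.mul_assoc]
  rw [cancel, factor, lem]
  have key : P * Ω * Qᴴ - ((Acv + 1) * Ω * (Acwᴴ + 1) + (2 : ℂ) • (Bcv * Bcwᴴ))
      = (-2 : ℂ) • (Acv * Ω + Ω * Acwᴴ + Bcv * Bcwᴴ) := by
    rw [hPdef, hQdef]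
    rw [Matrix.conjTranspose_sub, Matrix.conjTranspose_one]
    have e1 : ((2:ℂ)) • (Bcv * Bcwᴴ) = Bcv * Bcwᴴ + Bcv * Bcwᴴ := two_smul ℂ _
    have e2 : ((-2:ℂ)) • (Acv * Ω + Ω * Acwᴴ + Bcv * Bcwᴴ)
        = -((Acv * Ω + Ω * Acwᴴ + Bcv * Bcwᴴ) + (Acv * Ω + Ω * Acwᴴ + Bcv * Bcwᴴ)) := by
      rw [← two_smul ℂ, ← neg_smul]
    rw [e1, e2]
    simp only [Matrix.sub_mul, Matrix.mul_sub, Matrix.add_mul, Matrix.mul_add,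
      Matrix.one_mul, Matrix.mul_one]
    abel
  rw [← sub_eq_zero, key, smul_eq_zero]
  simp
end

section
/- Let A_cv (n_v×n_v) and A_cw (n_w×n_w) be complex matrices with I − A_cv and I − A_cw invertible, let B_cv, B_cw (of sizes n_v×m, n_w×m), C_cv (m×n_v), and D_cv (m×m) be complex matrices, and set A_dv = (I − A_cv)^{-1}(A_cv + I), B_dw = √2·(I − A_cw)^{-1}B_cw, A_dw = (I − A_cw)^{-1}(A_cw + I), C_dv = √2·C_cv(I − A_cv)^{-1}, D_dv = D_cv + C_cv(I − A_cv)^{-1}B_cv. Suppose Ω is an n_v×n_w matrix satisfying the Lyapunov equation A_cv·Ω + Ω·A_cw* + B_cv·B_cw* = 0, and define C_d∘ = D_dv·B_dw* + C_dv·Ω·A_dw* and C_c∘ = D_cv·B_cw* + C_cv·Ω. Then C_d∘ = √2·C_c∘·(I − A_cw*)^{-1}. -/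
set_option maxHeartbeats 1000000


open Matrix

theorem stmt_19 {nv nw m : ℕ}
    (Acv : Matrix (Fin nv) (Fin nv) ℂ) (Acw : Matrix (Fin nw) (Fin nw) ℂ)
    (hv : IsUnit ((1 : Matrix (Fin nv) (Fin nv) ℂ) - Acv))
    (hw : IsUnit ((1 : Matrix (Fin nw) (Fin nw) ℂ) - Acw))
    (Bcv : Matrix (Fin nv) (Fin m) ℂ) (Bcw : Matrix (Fin nw) (Fin m) ℂ)
    (Ccv : Matrix (Fin m) (Fin nv) ℂ) (Dcv : Matrix (Fin m) (Fin m) ℂ)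
    (Adv : Matrix (Fin nv) (Fin nv) ℂ) (Adw : Matrix (Fin nw) (Fin nw) ℂ)
    (Bdw : Matrix (Fin nw) (Fin m) ℂ)
    (Cdv : Matrix (Fin m) (Fin nv) ℂ) (Ddv : Matrix (Fin m) (Fin m) ℂ)
    (hAdv : Adv = (1 - Acv)⁻¹ * (Acv + 1))
    (hAdw : Adw = (1 - Acw)⁻¹ * (Acw + 1))
    (hBdw : Bdw = (Real.sqrt 2 : ℂ) • ((1 - Acw)⁻¹ * Bcw))
    (hCdv : Cdv = (Real.sqrt 2 : ℂ) • (Ccv * (1 - Acv)⁻¹))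
    (hDdv : Ddv = Dcv + Ccv * (1 - Acv)⁻¹ * Bcv)
    (Ω : Matrix (Fin nv) (Fin nw) ℂ)
    (hΩ : Acv * Ω + Ω * Acwᴴ + Bcv * Bcwᴴ = 0)
    (Cdo : Matrix (Fin m) (Fin nw) ℂ)
    (hCdo : Cdo = Ddv * Bdwᴴ + Cdv * Ω * Adwᴴ)
    (Cco : Matrix (Fin m) (Fin nw) ℂ)
    (hCco : Cco = Dcv * Bcwᴴ + Ccv * Ω) :
    Cdo = (Real.sqrt 2 : ℂ) • (Cco * (1 - Acwᴴ)⁻¹) := by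
  have hvd : IsUnit ((1 - Acv).det) := (Matrix.isUnit_iff_isUnit_det _).mp hv
  have hW : ((1 - Acw)⁻¹)ᴴ = (1 - Acwᴴ)⁻¹ := by
    rw [Matrix.conjTranspose_nonsing_inv]
    simp
  have hBdwH : Bdwᴴ = (Real.sqrt 2 : ℂ) • (Bcwᴴ * (1 - Acwᴴ)⁻¹) := by
    rw [hBdw, Matrix.conjTranspose_smul, Matrix.conjTranspose_mul, hW]
    simp [Complex.star_def]
  have hAdwH : Adwᴴ = (Acwᴴ + 1) * (1 - Acwᴴ)⁻¹ := by
    rw [hAdw, Matrix.conjTranspose_mul, hW]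
    simp
  have hkey : Bcv * Bcwᴴ + Ω * Acwᴴ = -(Acv * Ω) := by
    have h := hΩ
    rw [add_assoc] at h
    have h2 := eq_neg_of_add_eq_zero_right h
    rw [add_comm] at h2
    exact h2
  have hsum : Bcv * Bcwᴴ + (Ω * Acwᴴ + Ω) = (1 - Acv) * Ω := by
    calc Bcv * Bcwᴴ + (Ω * Acwᴴ + Ω) = (Bcv * Bcwᴴ + Ω * Acwᴴ) + Ω := by abel
    _ = -(Acv * Ω) + Ω := by rw [hkey]
    _ = (1 - Acv) * Ω := by rw [Matrix.sub_mul, Matrix.one_mul]; abel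
  have hmid : Ccv * (1 - Acv)⁻¹ * (Bcv * Bcwᴴ) + Ccv * (1 - Acv)⁻¹ * (Ω * Acwᴴ + Ω)
      = Ccv * Ω := by
    rw [← Matrix.mul_add, hsum, Matrix.mul_assoc Ccv, ← Matrix.mul_assoc ((1 - Acv)⁻¹),
      Matrix.nonsing_inv_mul _ hvd, Matrix.one_mul]
  have hE : (Dcv + Ccv * (1 - Acv)⁻¹ * Bcv) * (Bcwᴴ * (1 - Acwᴴ)⁻¹)
      + Ccv * (1 - Acv)⁻¹ * Ω * ((Acwᴴ + 1) * (1 - Acwᴴ)⁻¹)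
      = (Dcv * Bcwᴴ + Ccv * Ω) * (1 - Acwᴴ)⁻¹ := by
    rw [← hmid]
    simp only [Matrix.add_mul, Matrix.mul_add, Matrix.mul_one, Matrix.one_mul, Matrix.mul_assoc]
    abel
  rw [hCdo, hCco, hBdwH, hAdwH, hDdv, hCdv]
  simp only [Matrix.mul_smul, Matrix.smul_mul]
  rw [← smul_add, hE]
end
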